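/- arXiv:2111.00879 — 7 statements merged into one kernel-verified Lean document; each statement's English description precedes it below -/
import Mathlib

section
/- Let t and q be positive integers with 2 ≤ q ≤ (t+1)/2. Then for every integer n ≥ t, the bipartite Erdős–Gyárfás function satisfies ⌈n(q-1)/(t-1)⌉ ≤ r(K_{n,n}, K_{1,t}, q) ≤ ⌈n/⌊(t-1)/(q-1)⌋⌉. -/
open Finset

/-- `rBip n s t q` is the bipartite Erdős–Gyárfás function `r(K_{n,n}, K_{s,t}, q)`:
the minimum number of colors in an edge-coloring of `K_{n,n}` such that every copy of
`K_{s,t}` (with its part of size `s` in either side of the bipartition) receives at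
least `q` distinct colors on its edges. -/
noncomputable def rBip (n s t q : ℕ) : ℕ :=
  sInf {k : ℕ | ∃ c : Fin n → Fin n → ℕ,
    (∀ a b, c a b < k) ∧
    ∀ A B : Finset (Fin n),
      (A.card = s ∧ B.card = t) ∨ (A.card = t ∧ B.card = s) →
      q ≤ ((A ×ˢ B).image fun p => c p.1 p.2).card}


/-- Key counting lemma for the lower bound: if every `q` color classes of `f` on `B`
cover at most `t` elements, and `m` colors are used with `q ≤ m`, then `q * |B| ≤ m * t`. -/
lemma key_count {α : Type*} [DecidableEq α] (q t : ℕ) (hq : 1 ≤ q) :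
    ∀ (m : ℕ) (B : Finset α) (f : α → ℕ), (B.image f).card = m → q ≤ m →
      (∀ S : Finset ℕ, S.card = q → (B.filter fun x => f x ∈ S).card ≤ t) →
      q * B.card ≤ m * t := by
  intro m
  induction m using Nat.strong_induction_on with
  | _ m IH =>
    intro B f him hqm hcond
    rcases eq_or_lt_of_le hqm with heq | hlt
    · -- m = q : all elements covered by the q colors in the image
      have hB : B.filter (fun x => f x ∈ B.image f) = B := by
        apply Finset.filter_true_of_mem
        intro x hx; exact Finset.mem_image_of_mem f hx
      have := hcond (B.image f) (by rw [him, heq])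
      rw [hB] at this
      calc q * B.card ≤ q * t := Nat.mul_le_mul_left q this
        _ = m * t := by rw [heq]
    · -- m > q : remove a smallest color class
      have hne : (B.image f).Nonempty := by
        rw [← Finset.card_pos, him]; omega
      obtain ⟨i0, hi0mem, hi0min⟩ := Finset.exists_min_image (B.image f)
        (fun j => (B.filter fun x => f x = j).card) hne
      set B1 := B.filter (fun x => f x = i0) with hB1
      set B2 := B.filter (fun x => ¬ f x = i0) with hB2
      have hsplit : B1.card + B2.card = B.card :=
        Finset.card_filter_add_card_filter_not _
      -- image of B2
      have himg2 : B2.image f = (B.image f).erase i0 := by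
        ext j
        simp only [Finset.mem_image, Finset.mem_filter, Finset.mem_erase, hB2]
        constructor
        · rintro ⟨x, ⟨hxB, hxne⟩, rfl⟩
          exact ⟨hxne, x, hxB, rfl⟩
        · rintro ⟨hne', x, hxB, rfl⟩
          exact ⟨x, ⟨hxB, hne'⟩, rfl⟩
      have hcard2 : (B2.image f).card = m - 1 := by
        rw [himg2, Finset.card_erase_of_mem hi0mem, him]
      -- bound on B1 : q * B1.card ≤ t
      obtain ⟨S, hSsub1, hSsub, hScard⟩ := Finset.exists_subsuperset_card_eq
        (Finset.singleton_subset_iff.mpr hi0mem) (by simpa using hq) (by omega)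
      have hbiUnion : B.filter (fun x => f x ∈ S) =
          S.biUnion (fun j => B.filter fun x => f x = j) := by
        ext x
        simp only [Finset.mem_filter, Finset.mem_biUnion]
        constructor
        · rintro ⟨hxB, hxS⟩; exact ⟨f x, hxS, hxB, rfl⟩
        · rintro ⟨j, hjS, hxB, rfl⟩; exact ⟨hxB, hjS⟩
      have hdisj : ∀ x ∈ S, ∀ y ∈ S, x ≠ y →
          Disjoint (B.filter fun z => f z = x) (B.filter fun z => f z = y) := by
        intro x _ y _ hxy
        simp only [Finset.disjoint_left, Finset.mem_filter]
        rintro a ⟨_, rfl⟩ ⟨_, h⟩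
        exact hxy h
      have hsum : (B.filter fun x => f x ∈ S).card
          = ∑ j ∈ S, (B.filter fun x => f x = j).card := by
        rw [hbiUnion, Finset.card_biUnion hdisj]
      have hge : q * B1.card ≤ (B.filter fun x => f x ∈ S).card := by
        rw [hsum]
        have : ∀ j ∈ S, B1.card ≤ (B.filter fun x => f x = j).card := by
          intro j hjS
          exact hi0min j (hSsub hjS)
        calc q * B1.card = S.card • B1.card := by rw [hScard]; simp [Nat.smul_one_eq_cast]
          _ ≤ _ := Finset.card_nsmul_le_sum S _ _ this
      have hq1 : q * B1.card ≤ t := le_trans hge (hcond S hScard)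
      -- IH on B2
      have hcond2 : ∀ S : Finset ℕ, S.card = q → (B2.filter fun x => f x ∈ S).card ≤ t := by
        intro S hS
        refine le_trans (Finset.card_le_card ?_) (hcond S hS)
        intro x hx
        simp only [Finset.mem_filter, hB2] at *
        exact ⟨hx.1.1, hx.2⟩
      have h2 : q * B2.card ≤ (m - 1) * t :=
        IH (m - 1) (by omega) B2 f hcard2 (by omega) hcond2
      calc q * B.card = q * B1.card + q * B2.card := by rw [← hsplit]; ring
        _ ≤ t + (m - 1) * t := Nat.add_le_add hq1 h2
        _ = m * t := by
            cases m with
            | zero => omega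
            | succ m' => simp only [Nat.succ_sub_one]; ring

/-- Any finset of naturals has at least `⌈card/m⌉` distinct values of `·/m`. -/
lemma div_image_card (X : Finset ℕ) (m : ℕ) (hm : 0 < m) :
    X.card ≤ m * (X.image (fun x => x / m)).card := by
  apply Finset.card_le_mul_card_image
  intro b hb
  have hsub : (X.filter fun a => a / m = b) ⊆ Finset.Ico (b * m) (b * m + m) := by
    intro x hx
    simp only [Finset.mem_filter] at hx
    have h1 := Nat.div_add_mod x m
    have h2 := Nat.mod_lt x hm
    rw [hx.2] at h1
    rw [Finset.mem_Ico, Nat.mul_comm b m]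
    omega
  calc (X.filter fun a => a / m = b).card ≤ (Finset.Ico (b * m) (b * m + m)).card :=
        Finset.card_le_card hsub
    _ = m := by rw [Nat.card_Ico]; omega

/-- Injectivity of `b ↦ (a + b) % n` on `Fin n`. -/
lemma add_mod_injOn (n : ℕ) (a : ℕ) :
    Set.InjOn (fun b : Fin n => (a + b.val) % n) Set.univ := by
  intro b1 _ b2 _ h
  simp only at h
  have : b1.val ≡ b2.val [MOD n] := Nat.ModEq.add_left_cancel' a h
  have h1 : b1.val % n = b2.val % n := this
  rw [Nat.mod_eq_of_lt b1.isLt, Nat.mod_eq_of_lt b2.isLt] at h1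
  exact Fin.ext h1

/-- Star condition for the block coloring. -/
lemma star_colors (n t q m : ℕ) (hm : 0 < m) (hqm : (q - 1) * m + 1 ≤ t)
    (a : Fin n) (B : Finset (Fin n)) (hB : B.card = t) :
    q ≤ (B.image fun b => ((a.val + b.val) % n) / m).card := by
  set X := B.image (fun b : Fin n => (a.val + b.val) % n) with hX
  have hXcard : X.card = t := by
    rw [hX, Finset.card_image_of_injOn ((add_mod_injOn n a.val).mono (Set.subset_univ _)), hB]
  have himg : B.image (fun b => ((a.val + b.val) % n) / m) = X.image (fun x => x / m) := by
    rw [hX, Finset.image_image]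
    rfl
  have := div_image_card X m hm
  rw [hXcard] at this
  rw [himg]
  by_contra hcon
  push_neg at hcon
  have h1 : (X.image fun x => x / m).card ≤ q - 1 := by omega
  have h2 : t ≤ m * (q - 1) := le_trans this (Nat.mul_le_mul_left m h1)
  nlinarith [Nat.mul_comm m (q-1)]

/-- If `2 ≤ q ≤ (t+1)/2`, then for all `n ≥ t`,
`⌈n(q-1)/(t-1)⌉ ≤ r(K_{n,n}, K_{1,t}, q) ≤ ⌈n/⌊(t-1)/(q-1)⌋⌉`. -/
theorem stmt_0 (t q : ℕ) (ht : 1 ≤ t) (hq : 2 ≤ q) (hq' : 2 * q ≤ t + 1) :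
    ∀ n : ℕ, t ≤ n →
      (n * (q - 1) + (t - 1) - 1) / (t - 1) ≤ rBip n 1 t q ∧
      rBip n 1 t q ≤ (n + (t - 1) / (q - 1) - 1) / ((t - 1) / (q - 1)) := by
  intro n hn
  have ht3 : 3 ≤ t := by omega
  have hn1 : 1 ≤ n := by omega
  set m := (t - 1) / (q - 1) with hmdef
  have hm : 1 ≤ m := by
    rw [hmdef]
    exact Nat.one_le_div_iff (by omega) |>.mpr (by omega)
  have hqm : (q - 1) * m + 1 ≤ t := by
    have := Nat.div_mul_le_self (t - 1) (q - 1)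
    rw [hmdef, Nat.mul_comm]
    omega
  set k0 := (n + m - 1) / m with hk0def
  have hk0 : k0 = (n - 1) / m + 1 := by
    rw [hk0def]
    have : n + m - 1 = (n - 1) + m := by omega
    rw [this, Nat.add_div_right _ (by omega)]
  -- the coloring witnessing the upper bound
  have hmem : k0 ∈ {k : ℕ | ∃ c : Fin n → Fin n → ℕ,
      (∀ a b, c a b < k) ∧
      ∀ A B : Finset (Fin n),
        (A.card = 1 ∧ B.card = t) ∨ (A.card = t ∧ B.card = 1) →
        q ≤ ((A ×ˢ B).image fun p => c p.1 p.2).card} := by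
    refine ⟨fun a b => ((a.val + b.val) % n) / m, ?_, ?_⟩
    · intro a b
      show ((a.val + b.val) % n) / m < k0
      rw [hk0]
      have h1 : (a.val + b.val) % n ≤ n - 1 := by
        have := Nat.mod_lt (a.val + b.val) (show 0 < n by omega)
        omega
      have := Nat.div_le_div_right (c := m) h1
      omega
    · rintro A B (⟨hA, hB⟩ | ⟨hA, hB⟩)
      · obtain ⟨a, rfl⟩ := Finset.card_eq_one.mp hA
        have himg : (({a} ×ˢ B).image fun p => ((p.1.val + p.2.val) % n) / m)
            = B.image fun b => ((a.val + b.val) % n) / m := by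
          rw [Finset.singleton_product, Finset.map_eq_image, Finset.image_image]
          rfl
        rw [himg]
        exact star_colors n t q m (by omega) hqm a B hB
      · obtain ⟨b, rfl⟩ := Finset.card_eq_one.mp hB
        have himg : ((A ×ˢ {b}).image fun p => ((p.1.val + p.2.val) % n) / m)
            = A.image fun x => ((b.val + x.val) % n) / m := by
          rw [Finset.product_singleton, Finset.map_eq_image, Finset.image_image]
          congr 1
          funext x
          show ((x.val + b.val) % n) / m = _
          rw [Nat.add_comm]
        rw [himg]
        exact star_colors n t q m (by omega) hqm b A hA
  constructor
  · -- lower bound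
    apply le_csInf ⟨k0, hmem⟩
    rintro k ⟨c, hck, hcond⟩
    set a0 : Fin n := ⟨0, by omega⟩ with ha0
    set f : Fin n → ℕ := c a0 with hf
    have hrow : ∀ B : Finset (Fin n), B.card = t → q ≤ (B.image f).card := by
      intro B hB
      have := hcond {a0} B (Or.inl ⟨Finset.card_singleton a0, hB⟩)
      have himg : (({a0} ×ˢ B).image fun p => c p.1 p.2) = B.image f := by
        rw [Finset.singleton_product, Finset.map_eq_image, Finset.image_image]
        rfl
      rwa [himg] at this
    set M := ((Finset.univ : Finset (Fin n)).image f).card with hM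
    have hMk : M ≤ k := by
      rw [hM]
      refine le_trans (Finset.card_le_card ?_) (le_of_eq (Finset.card_range k))
      intro x hx
      obtain ⟨b, _, rfl⟩ := Finset.mem_image.mp hx
      exact Finset.mem_range.mpr (hck a0 b)
    have hqM : q ≤ M := by
      obtain ⟨B, hBsub, hBcard⟩ := Finset.exists_subset_card_eq
        (show t ≤ (Finset.univ : Finset (Fin n)).card by simp [hn])
      exact le_trans (hrow B hBcard)
        (Finset.card_le_card (Finset.image_subset_image hBsub))
    have hcondM : ∀ S : Finset ℕ, S.card = q - 1 →
        ((Finset.univ : Finset (Fin n)).filter fun x => f x ∈ S).card ≤ t - 1 := by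
      intro S hS
      by_contra hcon
      push_neg at hcon
      obtain ⟨B, hBsub, hBcard⟩ := Finset.exists_subset_card_eq
        (show t ≤ ((Finset.univ : Finset (Fin n)).filter fun x => f x ∈ S).card by omega)
      have h1 : B.image f ⊆ S := by
        intro y hy
        obtain ⟨x, hx, rfl⟩ := Finset.mem_image.mp hy
        exact (Finset.mem_filter.mp (hBsub hx)).2
      have h2 := hrow B hBcard
      have h3 := Finset.card_le_card h1
      omega
    have hkey := key_count (q - 1) (t - 1) (by omega) M Finset.univ f rfl (by omega) hcondM
    have hcard : (Finset.univ : Finset (Fin n)).card = n := by simp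
    rw [hcard] at hkey
    have h4 : n * (q - 1) ≤ (t - 1) * k := by
      calc n * (q - 1) = (q - 1) * n := Nat.mul_comm _ _
        _ ≤ M * (t - 1) := hkey
        _ ≤ k * (t - 1) := Nat.mul_le_mul_right _ hMk
        _ = (t - 1) * k := Nat.mul_comm _ _
    rw [Nat.div_le_iff_le_mul_add_pred (by omega : 0 < t - 1)]
    omega
  · exact Nat.sInf_le hmem
end

section
/- Let t and q be positive integers with (t+2)/2 ≤ q ≤ t. Then for every integer n ≥ t, the bipartite Erdős–Gyárfás function satisfies r(K_{n,n}, K_{1,t}, q) = n - t + q. -/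
/-!
Let `k = n - t + q`. Coloring the edge `ab` by `((a + b) mod n) mod k` works: the `t` leaves
of a star give `t` distinct residues mod `n`, at most `n - k = t - q` of which are `≥ k`, so the
star sees at least `q` colors. Conversely, if the row of one vertex uses fewer than `k` colors,
delete vertices carrying a color of their own as long as more than `t` vertices and more than
`q - 1` colors remain; once every color class has two vertices, `q - 1` classes already cover
`2(q - 1) ≥ t` vertices, giving a star with fewer than `q` colors.
-/

open Finset

/-- `c` is a `(K_{s,t}, q)`-coloring of `K_{n,n}`. -/
def IsEGColoring (n s t q : ℕ) (c : Fin n → Fin n → ℕ) : Prop :=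
  ∀ A B : Finset (Fin n), (#A = s ∧ #B = t) ∨ (#A = t ∧ #B = s) →
    q ≤ #((A ×ˢ B).image fun p => c p.1 p.2)

theorem rBip_eq {n s t q k : ℕ}
    (hcol : ∃ c : Fin n → Fin n → ℕ, (∀ a b, c a b < k) ∧ IsEGColoring n s t q c)
    (hmin : ∀ m (c : Fin n → Fin n → ℕ), (∀ a b, c a b < m) → IsEGColoring n s t q c → k ≤ m) :
    rBip n s t q = k :=
  IsLeast.csInf_eq ⟨hcol, fun m ⟨c, hc, hEG⟩ => hmin m c hc hEG⟩

theorem isEGColoring_one_iff {n t q : ℕ} {c : Fin n → Fin n → ℕ} :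
    IsEGColoring n 1 t q c ↔
      ∀ a (B : Finset (Fin n)), #B = t → q ≤ #(B.image (c a)) ∧ q ≤ #(B.image (c · a)) := by
  have hrow (a : Fin n) (B : Finset (Fin n)) :
      ((({a} : Finset (Fin n)) ×ˢ B).image fun p => c p.1 p.2) = B.image (c a) := by
    rw [singleton_product, map_eq_image, image_image]; rfl
  have hcol (a : Fin n) (B : Finset (Fin n)) :
      ((B ×ˢ ({a} : Finset (Fin n))).image fun p => c p.1 p.2) = B.image (c · a) := by
    rw [product_singleton, map_eq_image, image_image]; rfl
  constructor
  · intro hEG a B hB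
    exact ⟨hrow a B ▸ hEG {a} B (Or.inl ⟨card_singleton a, hB⟩),
      hcol a B ▸ hEG B {a} (Or.inr ⟨hB, card_singleton a⟩)⟩
  · rintro h A B (⟨hA, hB⟩ | ⟨hA, hB⟩)
    · obtain ⟨a, rfl⟩ := card_eq_one.1 hA
      exact hrow a B ▸ (h a B hB).1
    · obtain ⟨b, rfl⟩ := card_eq_one.1 hB
      exact hcol b A ▸ (h b A hA).2

def cyclicColoring (n k : ℕ) (a b : Fin n) : ℕ := (a + b).val % k

theorem cyclicColoring_comm (n k : ℕ) (a b : Fin n) :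
    cyclicColoring n k a b = cyclicColoring n k b a := by
  rw [cyclicColoring, add_comm]; rfl

theorem card_le_card_image_mod_add {n : ℕ} (k : ℕ) {Z : Finset ℕ} (hZ : Z ⊆ range n) :
    #Z ≤ #(Z.image (· % k)) + (n - k) := by
  have hlow : Z.filter (· < k) ⊆ Z.image (· % k) := fun z hz => by
    rw [mem_filter] at hz
    exact mem_image.2 ⟨z, hz.1, Nat.mod_eq_of_lt hz.2⟩
  have hhigh : Z.filter (¬ · < k) ⊆ Ico k n := fun z hz => by
    rw [mem_filter] at hz
    exact mem_Ico.2 ⟨not_lt.1 hz.2, mem_range.1 (hZ hz.1)⟩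
  calc #Z = #(Z.filter (· < k)) + #(Z.filter (¬ · < k)) :=
        (card_filter_add_card_filter_not _).symm
    _ ≤ #(Z.image (· % k)) + #(Ico k n) := add_le_add (card_le_card hlow) (card_le_card hhigh)
    _ = #(Z.image (· % k)) + (n - k) := by rw [Nat.card_Ico]

theorem card_le_card_image_cyclicColoring {n : ℕ} (k : ℕ) (a : Fin n) (B : Finset (Fin n)) :
    #B ≤ #(B.image (cyclicColoring n k a)) + (n - k) := by
  have h := card_le_card_image_mod_add k (Z := B.image fun b => (a + b).val)
    (fun _ hz => by obtain ⟨b, -, rfl⟩ := mem_image.1 hz; exact mem_range.2 (a + b).isLt)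
  rwa [card_image_of_injective B fun _ _ hb => add_right_injective a (Fin.val_injective hb),
    image_image] at h

theorem isEGColoring_cyclicColoring {n k t q : ℕ} (h : q + (n - k) ≤ t) :
    IsEGColoring n 1 t q (cyclicColoring n k) := by
  refine isEGColoring_one_iff.2 fun a B hB => ?_
  rw [show (cyclicColoring n k · a) = cyclicColoring n k a from
    funext fun b => cyclicColoring_comm n k b a]
  have := card_le_card_image_cyclicColoring k a B
  exact ⟨by omega, by omega⟩

theorem two_mul_card_le_card_filter_mem {α β : Type*} [DecidableEq β] {f : α → β}
    {s : Finset α} {C : Finset β} (hC : C ⊆ s.image f)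
    (hpair : ∀ x ∈ s, ∃ y ∈ s, f y = f x ∧ y ≠ x) :
    2 * #C ≤ #(s.filter (f · ∈ C)) := by
  classical
  rw [card_eq_sum_card_fiberwise (f := f) (s := s.filter (f · ∈ C)) (t := C)
    fun x hx => (mem_filter.1 hx).2, mul_comm, ← smul_eq_mul, ← sum_const]
  refine sum_le_sum fun b hb => ?_
  obtain ⟨x, hx, rfl⟩ := mem_image.1 (hC hb)
  obtain ⟨y, hy, hfy, hyx⟩ := hpair x hx
  calc 2 = #({x, y} : Finset α) := (card_pair hyx.symm).symm
    _ ≤ _ := card_le_card <| insert_subset (by simp [hx, hb]) (by simp [hy, hfy, hb])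

theorem exists_subset_card_eq_card_image_le {α β : Type*} [DecidableEq β] {f : α → β}
    {t p : ℕ} (htp : t ≤ 2 * p) {s : Finset α} (hts : t ≤ #s)
    (hs : #(s.image f) + t ≤ #s + p) : ∃ B ⊆ s, #B = t ∧ #(B.image f) ≤ p := by
  classical
  induction s using Finset.strongInduction with
  | H s ih =>
  by_cases hsmall : #(s.image f) ≤ p
  · obtain ⟨B, hBs, hB⟩ := exists_subset_card_eq hts
    exact ⟨B, hBs, hB, (card_le_card (image_subset_image hBs)).trans hsmall⟩
  by_cases hlonely : ∃ x ∈ s, ∀ y ∈ s, f y = f x → y = x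
  · -- removing an element with a color of its own keeps the hypothesis
    obtain ⟨x, hx, hxuniq⟩ := hlonely
    have himage : (s.erase x).image f = (s.image f).erase (f x) := by
      ext b
      simp only [mem_image, mem_erase]
      constructor
      · rintro ⟨y, ⟨hyx, hy⟩, rfl⟩
        exact ⟨fun h => hyx (hxuniq y hy h), y, hy, rfl⟩
      · rintro ⟨hb, y, hy, rfl⟩
        exact ⟨y, ⟨fun h => hb (h ▸ rfl), hy⟩, rfl⟩
    obtain ⟨B, hB, hBt, hBp⟩ := ih (s.erase x) (erase_ssubset hx)
      (by rw [card_erase_of_mem hx]; omega)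
      (by rw [himage, card_erase_of_mem (mem_image_of_mem f hx), card_erase_of_mem hx]; omega)
    exact ⟨B, hB.trans (erase_subset x s), hBt, hBp⟩
  · -- every color class has two elements, so `p` colors cover `2p ≥ t` elements
    push Not at hlonely
    obtain ⟨C, hC, hCp⟩ := exists_subset_card_eq (s := s.image f) (n := p) (by omega)
    have hfibers := two_mul_card_le_card_filter_mem hC hlonely
    obtain ⟨B, hB, hBt⟩ := exists_subset_card_eq (htp.trans (hCp ▸ hfibers))
    refine ⟨B, hB.trans (filter_subset _ _), hBt, hCp ▸ card_le_card fun b hb => ?_⟩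
    obtain ⟨x, hx, rfl⟩ := mem_image.1 hb
    exact (mem_filter.1 (hB hx)).2

theorem sub_add_le_of_isEGColoring {n t q m : ℕ} {c : Fin n → Fin n → ℕ} (hn : 0 < n)
    (htn : t ≤ n) (htq : t + 2 ≤ 2 * q) (hc : ∀ a b, c a b < m)
    (hEG : IsEGColoring n 1 t q c) : n - t + q ≤ m := by
  by_contra! hm
  let a : Fin n := ⟨0, hn⟩
  have hrow : #(univ.image (c a)) ≤ m := by
    simpa using card_le_card (s := univ.image (c a)) (t := range m) fun _ hv => by
      obtain ⟨b, -, rfl⟩ := mem_image.1 hv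
      exact mem_range.2 (hc a b)
  have huniv : #(univ : Finset (Fin n)) = n := card_fin n
  obtain ⟨B, -, hBt, hBq⟩ := exists_subset_card_eq_card_image_le (f := c a) (t := t) (p := q - 1)
    (s := univ) (by omega) (by omega) (by omega)
  have := ((isEGColoring_one_iff.1 hEG) a B hBt).1
  omega

theorem stmt_1_general (t q : ℕ) (hq1 : t + 2 ≤ 2 * q) (hq2 : q ≤ t) :
    ∀ n : ℕ, t ≤ n → rBip n 1 t q = n - t + q := by
  intro n hn
  exact rBip_eq
    ⟨cyclicColoring n (n - t + q), fun a b => Nat.mod_lt _ (by omega),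
      isEGColoring_cyclicColoring (by omega)⟩
    fun m c hc hEG => sub_add_le_of_isEGColoring (by omega) hn hq1 hc hEG

/-- If `(t+2)/2 ≤ q ≤ t`, then for all `n ≥ t`, `r(K_{n,n}, K_{1,t}, q) = n - t + q`. -/
theorem stmt_1 (t q : ℕ) (ht : 1 ≤ t) (hq : 1 ≤ q) (hq1 : t + 2 ≤ 2 * q) (hq2 : q ≤ t) :
    ∀ n : ℕ, t ≤ n → rBip n 1 t q = n - t + q :=
  stmt_1_general t q hq1 hq2
end

section
/- Let s and t be integers with t ≥ s ≥ 2 and set q = st - s - t + 3. Then there exist constants c₁ > 0, c₂ > 0, C > 0 and a natural number n₀ such that for all n ≥ n₀: c₁·n ≤ r(K_{n,n}, K_{s,t}, q) ≤ c₂·n, and r(K_{n,n}, K_{s,t}, q-1) ≤ C·n^{1 - 1/(s+t-1)}. (That is, r(K_{n,n}, K_{s,t}, st-s-t+3) = Θ(n) and r(K_{n,n}, K_{s,t}, st-s-t+2) = O(n^{1-1/(s+t-1)}).) -/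
/-!
Lower bound. Call a column `b` heavy in row `a` if its colour class in that row has at least `t`
elements. If columns `b ≠ b'` had equal colours in `s` rows in which `b` is heavy, these rows and
`t` columns of the class of `b` (including `b'`) would span a `K_{s,t}` with at most
`1 + (s-1)(t-1) < q` colours. Double counting then gives a row with at most `s n` monochromatic
ordered pairs of heavy columns; all but `k (t-1)` columns are heavy, and by Cauchy–Schwarz a row
with `h` heavy columns has at least `h² / k` such pairs. Hence `n = O(k)`.

Upper bounds. A copy of `K_{s,t}` with at most `st - D` colours contains `D` distinct cells, each
coloured like an earlier cell of the copy. For a uniformly random colouring with `k` colours such a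
configuration occurs with probability at most `k^{-D}`, and each configuration shares cells with
`O(n^{s+t-2})` others. The symmetric local lemma (in counting form) therefore gives a colouring
avoiding all of them once `k^D ≫ n^{s+t-2}`: `D = s+t-2` needs `k = O(n)`, and `D = s+t-1` needs
`k = O(n^{1 - 1/(s+t-1)})`.
-/

open Finset Function

section LocalLemma

variable {V K : Type*} [DecidableEq V]

theorem dependsOn_avoid {I : Type*} {E : I → (V → K) → Prop} {vbl : I → Finset V}
    (hdep : ∀ i, DependsOn (E i) (vbl i)) (S : Finset I) :
    DependsOn (fun ω => ∀ j ∈ S, ¬E j ω) (S.biUnion vbl : Set V) := by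
  intro ω ω' h
  exact propext <| forall₂_congr fun j hj => by
    rw [hdep j fun v hv => h v (by simpa using ⟨j, hj, hv⟩)]

variable [Fintype V] [Fintype K]

theorem card_filter_and_mul_card_eq {P Q : (V → K) → Prop} [DecidablePred P] [DecidablePred Q]
    {U W : Set V} (hP : DependsOn P U) (hQ : DependsOn Q W) (hUW : Disjoint U W) :
    #{ω | P ω ∧ Q ω} * Fintype.card (V → K) = #{ω | P ω} * #{ω | Q ω} := by
  classical
  -- exchanging the two colourings outside `U` maps `{P ∧ Q} × Ω` onto `{P} × {Q}`
  let mix : (V → K) × (V → K) → (V → K) × (V → K) := fun p =>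
    (U.piecewise p.1 p.2, U.piecewise p.2 p.1)
  have mix_mix (p) : mix (mix p) = p := by ext v <;> by_cases hv : v ∈ U <;> simp [mix, hv]
  have hP₁ (p) : P (mix p).1 = P p.1 := hP fun v hv => by simp [mix, hv]
  have hQ₁ (p) : Q (mix p).1 = Q p.2 := hQ fun v hv => by simp [mix, hUW.notMem_of_mem_right hv]
  have hQ₂ (p) : Q (mix p).2 = Q p.1 := hQ fun v hv => by simp [mix, hUW.notMem_of_mem_right hv]
  rw [← card_univ, ← card_product, ← card_product]
  refine card_bij' (fun p _ => mix p) (fun p _ => mix p) (fun p hp => ?_) (fun p hp => ?_)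
    (fun p _ => mix_mix p) (fun p _ => mix_mix p)
  · simp only [mem_product, mem_filter, mem_univ, true_and] at hp ⊢
    rw [hP₁, hQ₂]
    exact hp.1
  · simp only [mem_product, mem_filter, mem_univ, true_and, and_true] at hp ⊢
    rw [hP₁, hQ₁]
    exact hp

theorem card_filter_forall_eq_mul_pow_le [DecidableEq K] {ρ : Type*} [Fintype ρ] (rank : V → ℕ)
    {src tgt : ρ → V} (hsrc : Injective src) (hlt : ∀ r, rank (tgt r) < rank (src r)) :
    #{ω : V → K | ∀ r, ω (src r) = ω (tgt r)} * Fintype.card K ^ Fintype.card ρ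
      ≤ Fintype.card (V → K) := by
  set S := univ.image src
  have hS : #S = Fintype.card ρ := card_image_of_injective _ hsrc
  -- a solution is determined by its values off `S`: induct on the rank
  have hinj : Set.InjOn (fun ω (v : ↥Sᶜ) => ω v) {ω : V → K | ∀ r, ω (src r) = ω (tgt r)} := by
    intro ω hω ω' hω' heq
    funext x
    induction hx : rank x using Nat.strong_induction_on generalizing x with
    | _ m ih =>
      by_cases hxS : x ∈ S
      · obtain ⟨r, -, rfl⟩ := mem_image.mp hxS
        rw [hω r, hω' r, ih _ (hx ▸ hlt r) _ rfl]
      · exact congrFun heq ⟨x, mem_compl.mpr hxS⟩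
  have hcard : #{ω : V → K | ∀ r, ω (src r) = ω (tgt r)}
      ≤ Fintype.card K ^ (Fintype.card V - #S) := by
    calc _ ≤ Fintype.card (↥Sᶜ → K) :=
          card_le_card_of_injOn _ (fun _ _ => mem_univ _) (by simpa using hinj)
      _ = _ := by rw [Fintype.card_fun, Fintype.card_coe, card_compl]
  calc _ ≤ Fintype.card K ^ (Fintype.card V - #S) * Fintype.card K ^ #S := by
        rw [← hS]; exact Nat.mul_le_mul_right _ hcard
    _ = Fintype.card (V → K) := by
        rw [← pow_add, Nat.sub_add_cancel (card_le_univ S), Fintype.card_fun]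

variable {I : Type*} [Fintype I] {E : I → (V → K) → Prop} [∀ i, DecidablePred (E i)]
  {vbl : I → Finset V} {d : ℕ}

section Avoid

variable [DecidableEq I]

variable (E) in
theorem card_avoid_le_card_avoid_union_add_sum (S T : Finset I) :
    #{ω | ∀ j ∈ S, ¬E j ω}
      ≤ #{ω | ∀ j ∈ S ∪ T, ¬E j ω} + ∑ j ∈ T, #{ω | E j ω ∧ ∀ l ∈ S, ¬E l ω} := by
  classical
  calc _ ≤ #(({ω | ∀ j ∈ S ∪ T, ¬E j ω} : Finset (V → K)) ∪
          T.biUnion fun j => {ω | E j ω ∧ ∀ l ∈ S, ¬E l ω}) := by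
        refine card_le_card fun ω hω => ?_
        simp only [mem_filter, mem_univ, true_and, mem_union, mem_biUnion] at hω ⊢
        by_cases h : ∃ j ∈ T, E j ω
        · obtain ⟨j, hj, hE⟩ := h
          exact .inr ⟨j, hj, hE, hω⟩
        · push Not at h
          exact .inl fun j hj => hj.elim (hω j) (h j)
    _ ≤ _ := (card_union_le _ _).trans (Nat.add_le_add_left card_biUnion_le _)

-- the counting form of `P(E i | no event of S) ≤ 1 / (2d)`
theorem two_mul_card_filter_and_avoid_le [Nonempty K] (hdep : ∀ i, DependsOn (E i) (vbl i))
    (hd : 0 < d) (hdeg : ∀ i, #{j | ¬Disjoint (vbl i) (vbl j)} ≤ d)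
    (hE : ∀ i, 4 * d * #{ω | E i ω} ≤ Fintype.card (V → K)) (S : Finset I) (i : I) :
    2 * d * #{ω | E i ω ∧ ∀ j ∈ S, ¬E j ω} ≤ #{ω | ∀ j ∈ S, ¬E j ω} := by
  induction S using Finset.strongInduction generalizing i with
  | H S ih =>
  set far := S.filter fun j => Disjoint (vbl i) (vbl j)
  set near := S.filter fun j => ¬Disjoint (vbl i) (vbl j)
  -- `E i` is independent of the events in `far`
  have hfar : 4 * d * #{ω | E i ω ∧ ∀ j ∈ far, ¬E j ω} ≤ #{ω | ∀ j ∈ far, ¬E j ω} := by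
    have hdisj : Disjoint (vbl i : Set V) (far.biUnion vbl : Set V) := by
      rw [coe_biUnion, Set.disjoint_iUnion₂_right]
      exact fun j hj => disjoint_coe.mpr (mem_filter.mp hj).2
    have hindep := card_filter_and_mul_card_eq (hdep i) (dependsOn_avoid hdep far) hdisj
    refine Nat.le_of_mul_le_mul_right ?_ (Fintype.card_pos (α := V → K))
    calc 4 * d * #{ω | E i ω ∧ ∀ j ∈ far, ¬E j ω} * Fintype.card (V → K)
        = 4 * d * #{ω | E i ω} * #{ω | ∀ j ∈ far, ¬E j ω} := by rw [mul_assoc, hindep]; ring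
      _ ≤ _ := by rw [mul_comm _ (Fintype.card _)]; exact Nat.mul_le_mul_right _ (hE i)
  have hnear : ∀ j ∈ near,
      2 * d * #{ω | E j ω ∧ ∀ l ∈ far, ¬E l ω} ≤ #{ω | ∀ l ∈ far, ¬E l ω} := by
    intro j hj
    refine ih far ((ssubset_iff_of_subset (filter_subset _ _)).mpr
      ⟨j, (mem_filter.mp hj).1, ?_⟩) j
    simp only [mem_filter]
    exact fun h => (mem_filter.mp hj).2 h.2
  have hsum : 2 * d * ∑ j ∈ near, #{ω | E j ω ∧ ∀ l ∈ far, ¬E l ω}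
      ≤ d * #{ω | ∀ l ∈ far, ¬E l ω} := by
    rw [mul_sum]
    refine (sum_le_sum hnear).trans ?_
    rw [sum_const, smul_eq_mul]
    exact Nat.mul_le_mul_right _
      ((card_le_card (monotone_filter_left _ (subset_univ S))).trans (hdeg i))
  have hunion := card_avoid_le_card_avoid_union_add_sum E far near
  rw [filter_union_filter_not_eq] at hunion
  have hmono : #{ω | E i ω ∧ ∀ j ∈ S, ¬E j ω} ≤ #{ω | E i ω ∧ ∀ j ∈ far, ¬E j ω} :=
    card_le_card fun ω hω => by
      simp only [mem_filter, mem_univ, true_and] at hω ⊢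
      exact ⟨hω.1, fun j hj => hω.2 j (mem_filter.mp hj).1⟩
  -- by the union bound, excluding the events of `near` keeps at least half of the colourings
  have hhalf : #{ω | ∀ l ∈ far, ¬E l ω} ≤ 2 * #{ω | ∀ j ∈ S, ¬E j ω} := by
    refine Nat.le_of_mul_le_mul_left ?_ hd
    nlinarith
  nlinarith

end Avoid

theorem lovasz_local_lemma [Nonempty K] (hdep : ∀ i, DependsOn (E i) (vbl i)) (hd : 0 < d)
    (hdeg : ∀ i, #{j | ¬Disjoint (vbl i) (vbl j)} ≤ d)
    (hE : ∀ i, 4 * d * #{ω | E i ω} ≤ Fintype.card (V → K)) :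
    ∃ ω, ∀ i, ¬E i ω := by
  classical
  have hpos (S : Finset I) : 0 < #{ω | ∀ j ∈ S, ¬E j ω} := by
    induction S using Finset.induction_on with
    | empty => simpa using Fintype.card_pos (α := V → K)
    | insert j S hj ih =>
      have hunion := card_avoid_le_card_avoid_union_add_sum E S {j}
      have hcond := two_mul_card_filter_and_avoid_le hdep hd hdeg hE S j
      rw [union_singleton, sum_singleton] at hunion
      by_contra h0
      nlinarith
  obtain ⟨ω, hω⟩ := card_pos.mp (hpos univ)
  exact ⟨ω, fun i => (mem_filter.mp hω).2 i (mem_univ i)⟩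

end LocalLemma

section Frames

variable {V ι Φ : Type*} [DecidableEq V]

theorem exists_repeats_of_card_image_add_le {K : Type*} [DecidableEq K] {rank : V → ℕ}
    (hrank : Injective rank) (ω : V → K) {S : Finset V} {D : ℕ} (h : #(S.image ω) + D ≤ #S) :
    ∃ src tgt : Fin D → V, Injective src ∧
      ∀ r, src r ∈ S ∧ tgt r ∈ S ∧ rank (tgt r) < rank (src r) ∧ ω (src r) = ω (tgt r) := by
  set X := S.filter fun x => ∃ y ∈ S, rank y < rank x ∧ ω y = ω x
  -- the cells of `S` outside `X` are the first of their colour, so their colours are distinct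
  have hinj : Set.InjOn ω ↑(S \ X) := by
    intro x hx y hy hxy
    simp only [X, coe_sdiff, coe_filter, Set.mem_sdiff, mem_coe, Set.mem_ofPred_eq, not_and,
      not_exists] at hx hy
    by_contra hne
    rcases lt_or_gt_of_ne (hrank.ne hne) with hlt | hlt
    · exact hy.2 hy.1 x hx.1 hlt hxy
    · exact hx.2 hx.1 y hy.1 hlt hxy.symm
  have hX : D ≤ #X := by
    have h₁ := card_le_card (image_subset_image (sdiff_subset : S \ X ⊆ S) (f := ω))
    have hXS : X ⊆ S := filter_subset _ _
    rw [card_image_of_injOn hinj, card_sdiff_of_subset hXS] at h₁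
    have h₂ := card_le_card hXS
    omega
  obtain ⟨e⟩ := Function.Embedding.nonempty_of_card_le (α := Fin D) (β := X) (by simpa using hX)
  choose tgt htgt using fun r => (mem_filter.mp (e r).2).2
  exact ⟨fun r => e r, tgt, Subtype.val_injective.comp e.injective,
    fun r => ⟨(mem_filter.mp (e r).2).1, (htgt r).1, (htgt r).2.1, (htgt r).2.2.symm⟩⟩

def pairCells {D : ℕ} (F : Φ → ι → V) (p : Φ × (Fin D → ι × ι)) : Finset V :=
  univ.biUnion fun r => {F p.1 (p.2 r).1, F p.1 (p.2 r).2}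

variable {D M : ℕ} {F : Φ → ι → V}

theorem card_pairCells_le (p : Φ × (Fin D → ι × ι)) : #(pairCells F p) ≤ 2 * D :=
  (card_biUnion_le_card_mul _ _ 2 fun _ _ => card_le_two).trans (by simp [mul_comm])

-- `p.2` lists `D` pairs (later cell, earlier cell) of positions of `F p.1`
abbrev ColourRepeats {K : Type*} (rank : V → ℕ) (F : Φ → ι → V) (p : Φ × (Fin D → ι × ι))
    (ω : V → K) : Prop :=
  ((Injective fun r => F p.1 (p.2 r).1) ∧ ∀ r, rank (F p.1 (p.2 r).2) < rank (F p.1 (p.2 r).1)) ∧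
    ∀ r, ω (F p.1 (p.2 r).1) = ω (F p.1 (p.2 r).2)

theorem dependsOn_colourRepeats {K : Type*} (rank : V → ℕ) (F : Φ → ι → V)
    (p : Φ × (Fin D → ι × ι)) : DependsOn (ColourRepeats (K := K) rank F p) (pairCells F p) := by
  intro ω ω' h
  have hcell (r) (x : ι) (hx : x = (p.2 r).1 ∨ x = (p.2 r).2) : ω (F p.1 x) = ω' (F p.1 x) :=
    h _ (by simpa [pairCells] using ⟨r, hx.imp (congrArg _) (congrArg _)⟩)
  simp only [ColourRepeats, hcell _ _ (.inl rfl), hcell _ _ (.inr rfl)]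

theorem card_filter_colourRepeats_mul_pow_le [Fintype V] {K : Type*} [Fintype K]
    [DecidableEq K] (rank : V → ℕ) (F : Φ → ι → V) (p : Φ × (Fin D → ι × ι)) :
    #{ω : V → K | ColourRepeats rank F p ω} * Fintype.card K ^ D ≤ Fintype.card (V → K) := by
  by_cases hp : (Injective fun r => F p.1 (p.2 r).1) ∧
      ∀ r, rank (F p.1 (p.2 r).2) < rank (F p.1 (p.2 r).1)
  · calc _ ≤ #{ω : V → K | ∀ r, ω (F p.1 (p.2 r).1) = ω (F p.1 (p.2 r).2)}
          * Fintype.card K ^ Fintype.card (Fin D) := by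
          rw [Fintype.card_fin]
          refine Nat.mul_le_mul_right _ (card_le_card fun ω hω => ?_)
          simp only [mem_filter, mem_univ, true_and] at hω ⊢
          exact hω.2
      -- `convert` reconciles the two decidability instances of `∀ r : Fin D`
      _ ≤ _ := by convert card_filter_forall_eq_mul_pow_le (K := K) rank hp.1 hp.2
  · simp [ColourRepeats, hp]

variable [Fintype ι] [Fintype Φ]

theorem card_filter_mem_pairCells_le (hM : ∀ i v, #{φ | F φ i = v} ≤ M) (v : V) :
    #{p : Φ × (Fin D → ι × ι) | v ∈ pairCells F p} ≤ Fintype.card ι ^ (2 * D + 1) * M := by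
  classical
  have hsub : ({p : Φ × (Fin D → ι × ι) | v ∈ pairCells F p} : Finset _)
      ⊆ (univ.biUnion fun i => ({φ | F φ i = v} : Finset Φ)) ×ˢ univ := by
    intro p hp
    simp only [pairCells, mem_filter, mem_univ, true_and, mem_biUnion, mem_insert,
      mem_singleton] at hp
    obtain ⟨r, h | h⟩ := hp <;> simp [h]
  calc _ ≤ _ := card_le_card hsub
    _ ≤ (Fintype.card ι * M) * Fintype.card ι ^ (2 * D) := by
        rw [card_product]
        gcongr
        · exact card_biUnion_le_card_mul _ _ _ (fun i _ => hM i v) |>.trans (by simp)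
        · simp [pow_mul, sq]
    _ = _ := by ring

theorem card_filter_not_disjoint_pairCells_le (hM : ∀ i v, #{φ | F φ i = v} ≤ M)
    (p₀ : Φ × (Fin D → ι × ι)) :
    #{p : Φ × (Fin D → ι × ι) | ¬Disjoint (pairCells F p₀) (pairCells F p)}
      ≤ 2 * D * (Fintype.card ι ^ (2 * D + 1) * M) := by
  classical
  calc _ ≤ #((pairCells F p₀).biUnion fun v => {p | v ∈ pairCells F p}) :=
        card_le_card fun p hp => by
          obtain ⟨v, hv₀, hv⟩ := not_disjoint_iff.mp (mem_filter.mp hp).2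
          exact mem_biUnion.mpr ⟨v, hv₀, mem_filter.mpr ⟨mem_univ _, hv⟩⟩
    _ ≤ #(pairCells F p₀) * (Fintype.card ι ^ (2 * D + 1) * M) :=
        card_biUnion_le_card_mul _ _ _ fun v _ => card_filter_mem_pairCells_le hM v
    _ ≤ _ := Nat.mul_le_mul_right _ (card_pairCells_le p₀)

variable [Fintype V]

theorem exists_coloring_forall_card_image_lt {k : ℕ} (F : Φ → ι → V)
    (hM : ∀ i v, #{φ | F φ i = v} ≤ M)
    (hk : 4 * (2 * D * (Fintype.card ι ^ (2 * D + 1) * M) + 1) ≤ k ^ D) :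
    ∃ ω : V → Fin k, ∀ φ, #(univ.image (F φ)) < #((univ.image (F φ)).image ω) + D := by
  have hk₀ : 0 < k := by
    rcases Nat.eq_zero_or_pos k with rfl | h
    · rcases D with _ | D <;> simp at hk
    · exact h
  have : Nonempty (Fin k) := ⟨⟨0, hk₀⟩⟩
  let rank : V → ℕ := fun v => Fintype.equivFin V v
  have hrank : Injective rank := Fin.val_injective.comp (Fintype.equivFin V).injective
  obtain ⟨ω, hω⟩ := lovasz_local_lemma (E := ColourRepeats rank F) (dependsOn_colourRepeats rank F)
    (Nat.succ_pos _) (fun p => (card_filter_not_disjoint_pairCells_le hM p).trans (Nat.le_succ _))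
    fun p => by
      have := card_filter_colourRepeats_mul_pow_le (K := Fin k) rank F p
      rw [Fintype.card_fin, mul_comm] at this
      exact (Nat.mul_le_mul_right _ hk).trans this
  refine ⟨ω, fun φ => ?_⟩
  by_contra! h
  obtain ⟨src, tgt, hsrc, hrep⟩ := exists_repeats_of_card_image_add_le hrank ω h
  choose i hi using fun r => mem_image.mp (hrep r).1
  choose j hj using fun r => mem_image.mp (hrep r).2.1
  refine hω (φ, fun r => (i r, j r)) ⟨⟨fun r r' h => hsrc ?_, fun r => ?_⟩, fun r => ?_⟩
  · simpa [(hi r).2, (hi r').2] using h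
  · simpa [(hi r).2, (hj r).2] using (hrep r).2.2.1
  · simpa [(hi r).2, (hj r).2] using (hrep r).2.2.2

end Frames

section Grid

-- `φ.1` tells on which side of `K_{n,n}` the part of size `s` lies
def gridCell {n s t : ℕ} (φ : Bool × (Fin s → Fin n) × (Fin t → Fin n)) (ij : Fin s × Fin t) :
    Fin n × Fin n :=
  bif φ.1 then (φ.2.2 ij.2, φ.2.1 ij.1) else (φ.2.1 ij.1, φ.2.2 ij.2)

theorem card_filter_apply_eq {n s : ℕ} (i : Fin s) (a : Fin n) :
    #{f : Fin s → Fin n | f i = a} = n ^ (s - 1) := by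
  simpa using Fintype.card_filter_piFinset_const_eq_of_mem (univ : Finset (Fin n)) i (mem_univ a)

theorem card_filter_gridCell_eq_le {n s t : ℕ} (ij : Fin s × Fin t) (v : Fin n × Fin n) :
    #{φ : Bool × (Fin s → Fin n) × (Fin t → Fin n) | gridCell φ ij = v}
      ≤ 2 * (n ^ (s - 1) * n ^ (t - 1)) := by
  have hsub : ({φ | gridCell φ ij = v} : Finset (Bool × (Fin s → Fin n) × (Fin t → Fin n)))
      ⊆ ({true} : Finset Bool) ×ˢ
          (({f | f ij.1 = v.2} : Finset _) ×ˢ ({g | g ij.2 = v.1} : Finset _))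
        ∪ ({false} : Finset Bool) ×ˢ
          (({f | f ij.1 = v.1} : Finset _) ×ˢ ({g | g ij.2 = v.2} : Finset _)) := by
    rintro ⟨_ | _, f, g⟩ h <;> simp_all [gridCell, Prod.ext_iff]
  refine (card_le_card hsub).trans ((card_union_le _ _).trans ?_)
  simp only [card_product, card_singleton, card_filter_apply_eq]
  omega

theorem exists_gridCell_image_eq {n s t : ℕ} {A B : Finset (Fin n)}
    (h : (#A = s ∧ #B = t) ∨ (#A = t ∧ #B = s)) :
    ∃ φ : Bool × (Fin s → Fin n) × (Fin t → Fin n), univ.image (gridCell φ) = A ×ˢ B := by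
  have hmem {C : Finset (Fin n)} {m : ℕ} (hC : #C = m) (x : Fin n) :
      (∃ i, C.orderEmbOfFin hC i = x) ↔ x ∈ C := by
    rw [← mem_coe, ← range_orderEmbOfFin C hC, Set.mem_range]
  rcases h with ⟨hA, hB⟩ | ⟨hA, hB⟩
  · refine ⟨(false, A.orderEmbOfFin hA, B.orderEmbOfFin hB), ?_⟩
    ext ⟨a, b⟩
    simp [gridCell, ← hmem hA, ← hmem hB]
  · refine ⟨(true, B.orderEmbOfFin hB, A.orderEmbOfFin hA), ?_⟩
    ext ⟨a, b⟩
    simp [gridCell, ← hmem hA, ← hmem hB, and_comm]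

theorem exists_coloring_of_pow_le {n s t D k : ℕ}
    (hk : 4 * (2 * D * ((s * t) ^ (2 * D + 1) * (2 * (n ^ (s - 1) * n ^ (t - 1)))) + 1) ≤ k ^ D) :
    ∃ c : Fin n → Fin n → ℕ, (∀ a b, c a b < k) ∧ ∀ A B : Finset (Fin n),
      (#A = s ∧ #B = t) ∨ (#A = t ∧ #B = s) → s * t < #((A ×ˢ B).image fun p => c p.1 p.2) + D := by
  obtain ⟨ω, hω⟩ := exists_coloring_forall_card_image_lt gridCell card_filter_gridCell_eq_le
    (by simpa using hk)
  refine ⟨fun a b => ω (a, b), fun a b => (ω (a, b)).isLt, fun A B hAB => ?_⟩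
  obtain ⟨φ, hφ⟩ := exists_gridCell_image_eq hAB
  have hcard : #(A ×ˢ B) = s * t := by
    rcases hAB with ⟨hA, hB⟩ | ⟨hA, hB⟩ <;> simp [card_product, hA, hB, mul_comm]
  have hcolors : #((A ×ˢ B).image fun p => (ω (p.1, p.2) : ℕ)) = #((A ×ˢ B).image ω) := by
    rw [show (fun p : Fin n × Fin n => (ω (p.1, p.2) : ℕ)) = Fin.val ∘ ω from rfl, ← image_image,
      card_image_of_injective _ Fin.val_injective]
  have := hω φ
  rw [hφ, hcard] at this
  show s * t < #((A ×ˢ B).image fun p => (ω (p.1, p.2) : ℕ)) + D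
  rwa [hcolors]

end Grid

section LowerBound

theorem card_filter_card_fiber_lt_le {β : Type*} [Fintype β] (f : β → ℕ) {k t : ℕ}
    (hf : ∀ b, f b < k) : #{b | #{x | f x = f b} < t} ≤ k * (t - 1) := by
  set L := ({b | #{x | f x = f b} < t} : Finset β)
  calc #L ≤ (t - 1) * #(L.image f) := card_le_mul_card_image L (t - 1) fun v hv => by
        obtain ⟨b, hb, rfl⟩ := mem_image.mp hv
        have := (card_le_card (monotone_filter_left _ (subset_univ L))).trans_lt
          (mem_filter.mp hb).2
        omega
    _ ≤ (t - 1) * k := Nat.mul_le_mul_left _ <| (card_le_card fun v hv => by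
          obtain ⟨b, -, rfl⟩ := mem_image.mp hv
          exact mem_range.mpr (hf b)).trans (card_range k).le
    _ = k * (t - 1) := mul_comm _ _

theorem sq_card_le_card_image_mul_card_filter_eq {β γ : Type*} [DecidableEq β] [DecidableEq γ]
    (H : Finset β) (f : β → γ) :
    #H ^ 2 ≤ #(H.image f) * #{p ∈ H ×ˢ H | f p.1 = f p.2} := by
  have hpairs : #{p ∈ H ×ˢ H | f p.1 = f p.2} = ∑ v ∈ H.image f, #{x ∈ H | f x = v} ^ 2 := by
    rw [card_eq_sum_card_fiberwise (f := fun p => f p.1) (t := H.image f)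
      fun p hp => mem_image_of_mem f (mem_product.mp (mem_filter.mp hp).1).1]
    refine sum_congr rfl fun v _ => ?_
    rw [sq, ← card_product]
    congr 1
    ext ⟨x, y⟩
    simp only [mem_filter, mem_product]
    constructor
    · rintro ⟨⟨⟨hx, hy⟩, hxy⟩, rfl⟩
      exact ⟨⟨hx, rfl⟩, hy, hxy.symm⟩
    · rintro ⟨⟨hx, rfl⟩, hy, hxy⟩
      exact ⟨⟨⟨hx, hy⟩, hxy.symm⟩, rfl⟩
  rw [card_eq_sum_card_image f H, hpairs]
  exact sq_sum_le_card_mul_sum_sq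

variable {α : Type*} [DecidableEq α] {c : α → α → ℕ} {s t q k : ℕ}

theorem card_image_product_le {A B : Finset α} {a₀ b b' : α} (ha₀ : a₀ ∈ A) (hb : b ∈ B)
    (hb' : b' ∈ B) (hbb' : b ≠ b') (hrow : ∀ x ∈ B, c a₀ x = c a₀ b)
    (hcol : ∀ a ∈ A, c a b' = c a b) :
    #((A ×ˢ B).image fun p => c p.1 p.2) ≤ 1 + (#A - 1) * (#B - 1) := by
  calc _ ≤ #({c a₀ b} ∪ (A.erase a₀).biUnion fun a => (B.erase b').image (c a)) := by
        refine card_le_card fun y hy => ?_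
        obtain ⟨⟨a, x⟩, hax, rfl⟩ := mem_image.mp hy
        obtain ⟨ha, hx⟩ := mem_product.mp hax
        rw [mem_union, mem_singleton, mem_biUnion]
        by_cases ha₀' : a = a₀
        · exact .inl (ha₀' ▸ hrow x hx)
        refine .inr ⟨a, mem_erase.mpr ⟨ha₀', ha⟩, ?_⟩
        by_cases hxb' : x = b'
        · exact mem_image.mpr ⟨b, mem_erase.mpr ⟨hbb', hb⟩, by rw [hxb', hcol a ha]⟩
        · exact mem_image_of_mem _ (mem_erase.mpr ⟨hxb', hx⟩)
    _ ≤ 1 + #(A.erase a₀) * #(B.erase b') :=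
        (card_union_le _ _).trans <| Nat.add_le_add (card_singleton _).le <|
          card_biUnion_le_card_mul _ _ _ fun _ _ => card_image_le
    _ = 1 + (#A - 1) * (#B - 1) := by rw [card_erase_of_mem ha₀, card_erase_of_mem hb']

variable [Fintype α]

def heavyCols (c : α → α → ℕ) (t : ℕ) (a : α) : Finset α := {b | t ≤ #{x | c a x = c a b}}

theorem card_filter_mem_heavyCols_and_eq_lt (hs : 1 ≤ s) (ht : 2 ≤ t)
    (hq : 1 + (s - 1) * (t - 1) < q)
    (hc : ∀ A B : Finset α, #A = s → #B = t → q ≤ #((A ×ˢ B).image fun p => c p.1 p.2))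
    {b b' : α} (hbb' : b ≠ b') :
    #{a | b ∈ heavyCols c t a ∧ c a b' = c a b} < s := by
  by_contra! hR
  obtain ⟨A, hAR, hA⟩ := exists_subset_card_eq hR
  obtain ⟨a₀, ha₀⟩ : A.Nonempty := card_pos.mp (by omega)
  obtain ⟨hheavy, hb'⟩ := (mem_filter.mp (hAR ha₀)).2
  rw [heavyCols, mem_filter] at hheavy
  have hpair : {b, b'} ⊆ ({x | c a₀ x = c a₀ b} : Finset α) := by
    simp [insert_subset_iff, hb']
  obtain ⟨B, hpairB, hBcls, hB⟩ :=
    exists_subsuperset_card_eq hpair (by rw [card_pair hbb']; exact ht) hheavy.2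
  have hle := card_image_product_le ha₀ (hpairB (mem_insert_self _ _)) (hpairB (by simp)) hbb'
    (fun x hx => (mem_filter.mp (hBcls hx)).2) (fun a ha => (mem_filter.mp (hAR ha)).2.2)
  have hge := hc A B hA hB
  rw [hA, hB] at hle
  omega

theorem sum_card_heavyCols_pairs_le (hs : 1 ≤ s) (ht : 2 ≤ t) (hq : 1 + (s - 1) * (t - 1) < q)
    (hc : ∀ A B : Finset α, #A = s → #B = t → q ≤ #((A ×ˢ B).image fun p => c p.1 p.2)) :
    ∑ a, #{p ∈ heavyCols c t a ×ˢ heavyCols c t a | c a p.1 = c a p.2}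
      ≤ ∑ _a : α, s * Fintype.card α := by
  set n := Fintype.card α
  calc _ ≤ ∑ a, #{p : α × α | p.1 ∈ heavyCols c t a ∧ c a p.2 = c a p.1} :=
        sum_le_sum fun a _ => card_le_card fun p hp => by
          simp only [mem_filter, mem_product, mem_univ, true_and] at hp ⊢
          exact ⟨hp.1.1, hp.2.symm⟩
    _ = ∑ b, ∑ b', #{a | b ∈ heavyCols c t a ∧ c a b' = c a b} := by
        simp only [card_filter]
        rw [sum_comm, Fintype.sum_prod_type]
    _ ≤ ∑ _b : α, s * n := sum_le_sum fun b _ => ?_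
  rw [← add_sum_erase univ _ (mem_univ b)]
  calc _ ≤ n + ∑ _b' ∈ univ.erase b, (s - 1) :=
        Nat.add_le_add (card_le_univ _) <| sum_le_sum fun b' hb' =>
          Nat.le_sub_one_of_lt <|
            card_filter_mem_heavyCols_and_eq_lt hs ht hq hc (ne_of_mem_erase hb').symm
    _ ≤ n + n * (s - 1) := by
        rw [sum_const, smul_eq_mul, card_erase_of_mem (mem_univ b), card_univ]
        exact Nat.add_le_add_left (Nat.mul_le_mul_right _ (Nat.sub_le n 1)) n
    _ = s * n := by
        obtain ⟨s, rfl⟩ := Nat.exists_eq_add_of_le' hs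
        simp only [Nat.add_sub_cancel]
        ring

theorem card_le_of_forall_card_image_product (hs : 1 ≤ s) (ht : 2 ≤ t)
    (hq : 1 + (s - 1) * (t - 1) < q) (hck : ∀ a b, c a b < k)
    (hc : ∀ A B : Finset α, #A = s → #B = t → q ≤ #((A ×ˢ B).image fun p => c p.1 p.2)) :
    Fintype.card α ≤ 4 * (s + t) * k := by
  set n := Fintype.card α
  rcases isEmpty_or_nonempty α with hα | hα
  · simp [n]
  obtain ⟨a, -, ha⟩ := exists_le_of_sum_le univ_nonempty (sum_card_heavyCols_pairs_le hs ht hq hc)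
  set H := heavyCols c t a
  have hcs := sq_card_le_card_image_mul_card_filter_eq H (c a)
  have himage : #(H.image (c a)) ≤ k :=
    (card_le_card fun v hv => by
      obtain ⟨b, -, rfl⟩ := mem_image.mp hv
      exact mem_range.mpr (hck a b)).trans (card_range k).le
  have hlight : n ≤ #H + k * t := by
    have hL := card_filter_card_fiber_lt_le (c a) (hck a) (t := t)
    have hsplit := card_filter_add_card_filter_not (s := univ) (fun b => t ≤ #{x | c a x = c a b})
    simp only [not_le, card_univ] at hsplit
    have : k * (t - 1) ≤ k * t := Nat.mul_le_mul_left _ (Nat.sub_le t 1)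
    simp only [H, heavyCols]
    omega
  have hHn : #H ≤ n := card_le_univ H
  by_contra! hlt
  have h2H : n ≤ 2 * #H := by nlinarith
  have : #H ^ 2 ≤ k * (s * n) := hcs.trans (Nat.mul_le_mul himage ha)
  nlinarith

end LowerBound

section Asymptotics

theorem exists_coloring_lt_rBip {n s t q : ℕ} (hq : q ≤ s * t) :
    ∃ c : Fin n → Fin n → ℕ, (∀ a b, c a b < rBip n s t q) ∧ ∀ A B : Finset (Fin n),
      (#A = s ∧ #B = t) ∨ (#A = t ∧ #B = s) → q ≤ #((A ×ˢ B).image fun p => c p.1 p.2) := by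
  have hcolors : ∀ A B : Finset (Fin n), (#A = s ∧ #B = t) ∨ (#A = t ∧ #B = s) →
      q ≤ #((A ×ˢ B).image fun p => (finProdFinEquiv (p.1, p.2) : ℕ)) := by
    intro A B hAB
    have hinj : Injective fun p : Fin n × Fin n => (finProdFinEquiv (p.1, p.2) : ℕ) :=
      Fin.val_injective.comp finProdFinEquiv.injective
    rw [card_image_of_injective _ hinj, card_product]
    rcases hAB with ⟨hA, hB⟩ | ⟨hA, hB⟩ <;> simp [hA, hB, mul_comm, hq]
  exact Nat.sInf_mem (s := {k | ∃ c : Fin n → Fin n → ℕ, (∀ a b, c a b < k) ∧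
      ∀ A B : Finset (Fin n), (#A = s ∧ #B = t) ∨ (#A = t ∧ #B = s) →
        q ≤ #((A ×ˢ B).image fun p => c p.1 p.2)})
    ⟨n * n, fun a b => finProdFinEquiv (a, b), fun a b => (finProdFinEquiv (a, b)).isLt, hcolors⟩

theorem le_four_mul_rBip {n s t : ℕ} (hs : 2 ≤ s) (ht : 2 ≤ t) :
    n ≤ 4 * (s + t) * rBip n s t (s * t - s - t + 3) := by
  have hprod : (s - 1) * (t - 1) + s + t = s * t + 1 := by
    obtain ⟨s, rfl⟩ := Nat.exists_eq_add_of_le' (by omega : 1 ≤ s)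
    obtain ⟨t, rfl⟩ := Nat.exists_eq_add_of_le' (by omega : 1 ≤ t)
    simp only [Nat.add_sub_cancel]
    ring
  obtain ⟨c, hck, hc⟩ :=
    exists_coloring_lt_rBip (n := n) (s := s) (t := t) (q := s * t - s - t + 3) (by omega)
  simpa using card_le_of_forall_card_image_product (q := s * t - s - t + 3) (by omega) ht
    (by omega) hck fun A B hA hB => hc A B (.inl ⟨hA, hB⟩)

theorem rBip_le_of_mul_pow_le {n s t q D k : ℕ} (hn : 0 < n) (hs : 1 ≤ s) (ht : 1 ≤ t)
    (hq : q + D ≤ s * t + 1) (hk : (16 * D * (s * t) ^ (2 * D + 1) + 4) * n ^ (s + t - 2) ≤ k ^ D) :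
    rBip n s t q ≤ k := by
  have hpow : n ^ (s - 1) * n ^ (t - 1) = n ^ (s + t - 2) := by rw [← pow_add]; congr 1; omega
  have hn' : 1 ≤ n ^ (s + t - 2) := Nat.one_le_pow _ _ hn
  obtain ⟨c, hck, hc⟩ := exists_coloring_of_pow_le (n := n) (s := s) (t := t) (D := D) (k := k)
    (by rw [hpow]; nlinarith)
  exact Nat.sInf_le ⟨c, hck, fun A B hAB => by have := hc A B hAB; omega⟩

theorem exists_rBip_le_mul {s t : ℕ} (hs : 2 ≤ s) (ht : 2 ≤ t) :
    ∃ C : ℕ, 0 < C ∧ ∀ n, 0 < n → rBip n s t (s * t - s - t + 3) ≤ C * n := by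
  have hst : s + t ≤ s * t := by nlinarith
  refine ⟨16 * (s + t - 2) * (s * t) ^ (2 * (s + t - 2) + 1) + 4, by positivity, fun n hn =>
    rBip_le_of_mul_pow_le (D := s + t - 2) hn (by omega) (by omega) (by omega) ?_⟩
  exact (Nat.mul_le_mul_right _ (Nat.le_self_pow (by omega : s + t - 2 ≠ 0) _)).trans_eq
    (mul_pow _ _ _).symm

theorem rpow_one_sub_one_div_pow {x : ℝ} (hx : 0 ≤ x) {D : ℕ} (hD : D ≠ 0) :
    (x ^ (1 - 1 / (D : ℝ))) ^ D = x ^ (D - 1) := by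
  have hD' : (D : ℝ) ≠ 0 := Nat.cast_ne_zero.mpr hD
  rw [← Real.rpow_natCast, ← Real.rpow_mul hx, ← Real.rpow_natCast,
    Nat.cast_sub (Nat.one_le_iff_ne_zero.mpr hD)]
  congr 1
  field_simp
  ring

theorem exists_rBip_le_mul_rpow {s t : ℕ} (hs : 2 ≤ s) (ht : 2 ≤ t) :
    ∃ C : ℝ, 0 < C ∧ ∀ n : ℕ, 0 < n →
      (rBip n s t (s * t - s - t + 2) : ℝ) ≤ C * (n : ℝ) ^ ((1 : ℝ) - 1 / ((s : ℝ) + t - 1)) := by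
  have hst : s + t ≤ s * t := by nlinarith
  set D := s + t - 1 with hD
  have hDR : (s : ℝ) + t - 1 = D := by rw [hD, Nat.cast_sub (by omega)]; push_cast; ring
  set B := 16 * D * (s * t) ^ (2 * D + 1) + 4
  refine ⟨2 * B, by positivity, fun n hn => ?_⟩
  rw [hDR]
  set x : ℝ := (n : ℝ) ^ ((1 : ℝ) - 1 / D)
  have hx : 1 ≤ x := Real.one_le_rpow (by exact_mod_cast hn)
    (sub_nonneg.mpr (div_le_one_of_le₀ (by exact_mod_cast (by omega : 1 ≤ D)) (Nat.cast_nonneg D)))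
  have hceil : n ^ (s + t - 2) ≤ ⌈x⌉₊ ^ D := by
    have := pow_le_pow_left₀ (by positivity) (Nat.le_ceil x) D
    rw [rpow_one_sub_one_div_pow (Nat.cast_nonneg n) (by omega), (by omega : D - 1 = s + t - 2)]
      at this
    exact_mod_cast this
  have hle : rBip n s t (s * t - s - t + 2) ≤ B * ⌈x⌉₊ :=
    rBip_le_of_mul_pow_le (D := D) hn (by omega) (by omega) (by omega) <|
      (Nat.mul_le_mul (Nat.le_self_pow (by omega : D ≠ 0) _) hceil).trans_eq (mul_pow _ _ _).symm
  calc (rBip n s t (s * t - s - t + 2) : ℝ) ≤ B * ⌈x⌉₊ := by exact_mod_cast hle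
    _ ≤ B * (x + 1) := by gcongr; exact (Nat.ceil_lt_add_one (by positivity)).le
    _ ≤ 2 * B * x := by nlinarith

end Asymptotics

/-- For `t ≥ s ≥ 2` and `q = st - s - t + 3`, `r(K_{n,n}, K_{s,t}, q) = Θ(n)` and
`r(K_{n,n}, K_{s,t}, q - 1) = O(n^{1 - 1/(s+t-1)})`. -/
theorem stmt_2 (s t : ℕ) (hs : 2 ≤ s) (hst : s ≤ t) :
    ∃ c₁ c₂ C : ℝ, 0 < c₁ ∧ 0 < c₂ ∧ 0 < C ∧ ∃ n₀ : ℕ, ∀ n : ℕ, n₀ ≤ n →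
      c₁ * (n : ℝ) ≤ (rBip n s t (s * t - s - t + 3) : ℝ) ∧
      (rBip n s t (s * t - s - t + 3) : ℝ) ≤ c₂ * (n : ℝ) ∧
      (rBip n s t (s * t - s - t + 2) : ℝ) ≤
        C * (n : ℝ) ^ ((1 : ℝ) - 1 / ((s : ℝ) + (t : ℝ) - 1)) := by
  have ht : 2 ≤ t := hs.trans hst
  obtain ⟨c₂, hc₂, hlinear⟩ := exists_rBip_le_mul hs ht
  obtain ⟨C, hC, hsublinear⟩ := exists_rBip_le_mul_rpow hs ht
  refine ⟨1 / (4 * (s + t)), c₂, C, by positivity, by exact_mod_cast hc₂, hC, 1,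
    fun n hn => ⟨?_, by exact_mod_cast hlinear n hn, hsublinear n hn⟩⟩
  rw [div_mul_eq_mul_div, one_mul, div_le_iff₀ (by positivity)]
  exact_mod_cast (le_four_mul_rBip (n := n) hs ht).trans_eq (mul_comm _ _)
end

section
/- Let s and t be integers with t ≥ s ≥ 2. Then there exist a constant c > 0 and a natural number n₀ such that for all n ≥ n₀, c·n² ≤ r(K_{n,n}, K_{s,t}, st - s + 2) ≤ n². (That is, r(K_{n,n}, K_{s,t}, st-s+2) = Θ(n²).) -/
open Finset

/-- For `t ≥ s ≥ 2`, `r(K_{n,n}, K_{s,t}, st - s + 2) = Θ(n²)`. -/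
theorem stmt_4 (s t : ℕ) (hs : 2 ≤ s) (hst : s ≤ t) :
    ∃ c : ℝ, 0 < c ∧ ∃ n₀ : ℕ, ∀ n : ℕ, n₀ ≤ n →
      c * (n : ℝ) ^ 2 ≤ (rBip n s t (s * t - s + 2) : ℝ) ∧
      (rBip n s t (s * t - s + 2) : ℝ) ≤ (n : ℝ) ^ 2 := by
  have hs1 : (1 : ℝ) ≤ (s : ℝ) - 1 := by
    have : (2 : ℝ) ≤ (s : ℝ) := by exact_mod_cast hs
    linarith
  refine ⟨1 / ((s : ℝ) - 1), by positivity, t, fun n hn => ?_⟩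
  have hsn : s ≤ n := hst.trans hn
  have hn0 : 0 < n := lt_of_lt_of_le (by omega) hsn
  have hsle : s ≤ s * t := Nat.le_mul_of_pos_right _ (by omega)
  set q : ℕ := s * t - s + 2 with hq
  set S : Set ℕ := {k : ℕ | ∃ c : Fin n → Fin n → ℕ,
    (∀ a b, c a b < k) ∧
    ∀ A B : Finset (Fin n),
      (A.card = s ∧ B.card = t) ∨ (A.card = t ∧ B.card = s) →
      q ≤ ((A ×ˢ B).image fun p => c p.1 p.2).card} with hS
  -- the rainbow coloring shows n*n ∈ S
  have hinj : Function.Injective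
      (fun p : Fin n × Fin n => ((finProdFinEquiv p : Fin (n * n)) : ℕ)) := by
    intro p p' h
    simp only at h
    exact finProdFinEquiv.injective (Fin.ext h)
  have hmem : n * n ∈ S := by
    refine ⟨fun a b => ((finProdFinEquiv (a, b) : Fin (n * n)) : ℕ),
      fun a b => (finProdFinEquiv (a, b) : Fin (n * n)).isLt, fun A B hAB => ?_⟩
    · rw [show (fun p : Fin n × Fin n => ((finProdFinEquiv (p.1, p.2) : Fin (n * n)) : ℕ))
          = (fun p : Fin n × Fin n => ((finProdFinEquiv p : Fin (n * n)) : ℕ)) from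
          funext (fun p => by rfl),
        Finset.card_image_of_injective _ hinj, Finset.card_product]
      rcases hAB with ⟨hA, hB⟩ | ⟨hA, hB⟩ <;> rw [hA, hB]
      · omega
      · rw [Nat.mul_comm]; omega
  have hne : S.Nonempty := ⟨n * n, hmem⟩
  have hub : rBip n s t q ≤ n * n := Nat.sInf_le hmem
  -- lower bound: every k ∈ S satisfies n*n ≤ k * (s-1)
  obtain ⟨c, hck, hcol⟩ : rBip n s t q ∈ S := Nat.sInf_mem hne
  set k := rBip n s t q with hk
  -- each color class has at most s-1 cells
  have hfib : ∀ v : ℕ,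
      ((univ : Finset (Fin n × Fin n)).filter (fun p => c p.1 p.2 = v)).card ≤ s - 1 := by
    intro v
    by_contra hcon
    have hs' : s ≤ ((univ : Finset (Fin n × Fin n)).filter
        (fun p => c p.1 p.2 = v)).card := by omega
    obtain ⟨E, hE, hEcard⟩ := Finset.exists_subset_card_eq hs'
    have hA0 : (E.image Prod.fst).card ≤ s := le_trans Finset.card_image_le (le_of_eq hEcard)
    have hB0 : (E.image Prod.snd).card ≤ t :=
      le_trans (le_trans Finset.card_image_le (le_of_eq hEcard)) hst
    obtain ⟨A, hA0A, hAcard⟩ := Finset.exists_superset_card_eq hA0 (by simpa using hsn)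
    obtain ⟨B, hB0B, hBcard⟩ := Finset.exists_superset_card_eq hB0 (by simpa using hn)
    have hEsub : E ⊆ A ×ˢ B := by
      intro p hp
      rw [Finset.mem_product]
      exact ⟨hA0A (Finset.mem_image_of_mem _ hp), hB0B (Finset.mem_image_of_mem _ hp)⟩
    have hEv : ∀ p ∈ E, c p.1 p.2 = v := fun p hp => (Finset.mem_filter.1 (hE hp)).2
    -- the image of c on A ×ˢ B has at most s*t - s + 1 colors
    have hsubset : (A ×ˢ B).image (fun p => c p.1 p.2) ⊆
        insert v (((A ×ˢ B) \ E).image (fun p => c p.1 p.2)) := by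
      intro x hx
      obtain ⟨p, hp, hpx⟩ := Finset.mem_image.1 hx
      by_cases hpE : p ∈ E
      · rw [← hpx, hEv p hpE]; exact Finset.mem_insert_self _ _
      · exact Finset.mem_insert_of_mem
          (Finset.mem_image.2 ⟨p, Finset.mem_sdiff.2 ⟨hp, hpE⟩, hpx⟩)
    have hcard : (((A ×ˢ B)).image (fun p => c p.1 p.2)).card ≤ s * t - s + 1 := by
      calc (((A ×ˢ B)).image (fun p => c p.1 p.2)).card
          ≤ (insert v (((A ×ˢ B) \ E).image (fun p => c p.1 p.2))).card :=
            Finset.card_le_card hsubset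
        _ ≤ (((A ×ˢ B) \ E).image (fun p => c p.1 p.2)).card + 1 :=
            Finset.card_insert_le _ _
        _ ≤ ((A ×ˢ B) \ E).card + 1 := by
            exact Nat.add_le_add_right Finset.card_image_le 1
        _ = (A ×ˢ B).card - E.card + 1 := by rw [Finset.card_sdiff_of_subset hEsub]
        _ = s * t - s + 1 := by
            rw [Finset.card_product, hAcard, hBcard, hEcard]
    have := hcol A B (Or.inl ⟨hAcard, hBcard⟩)
    omega
  -- summing over colors
  have hsum : (univ : Finset (Fin n × Fin n)).card =
      ∑ v ∈ Finset.range k, ((univ : Finset (Fin n × Fin n)).filter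
        (fun p => c p.1 p.2 = v)).card :=
    Finset.card_eq_sum_card_fiberwise (fun p _ => Finset.mem_range.2 (hck p.1 p.2))
  have hlb : n * n ≤ k * (s - 1) := by
    have h1 : (univ : Finset (Fin n × Fin n)).card = n * n := by
      simp [Finset.card_univ]
    calc n * n = ∑ v ∈ Finset.range k, ((univ : Finset (Fin n × Fin n)).filter
          (fun p => c p.1 p.2 = v)).card := by rw [← h1, hsum]
      _ ≤ ∑ _v ∈ Finset.range k, (s - 1) := Finset.sum_le_sum (fun v _ => hfib v)
      _ = k * (s - 1) := by rw [Finset.sum_const, Finset.card_range, smul_eq_mul]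
  constructor
  · have hR : (n : ℝ) * n ≤ (k : ℝ) * ((s : ℝ) - 1) := by
      have := hlb
      have hcast : ((n * n : ℕ) : ℝ) ≤ ((k * (s - 1) : ℕ) : ℝ) := by exact_mod_cast this
      push_cast [Nat.cast_sub (by omega : 1 ≤ s)] at hcast
      convert hcast using 2 <;> push_cast <;> ring_nf
    rw [div_mul_eq_mul_div, div_le_iff₀ (by linarith)]
    nlinarith [hR]
  · have : ((rBip n s t q : ℕ) : ℝ) ≤ ((n * n : ℕ) : ℝ) := by exact_mod_cast hub
    push_cast at this
    nlinarith [this]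
end

section
/- Let s and t be integers with t ≥ s and 2 ≤ s ≤ 3. Then there exist a constant c > 0 and a natural number n₀ such that for all n ≥ n₀, c·n² ≤ r(K_{n,n}, K_{s,t}, st - ⌊t/2⌋ + 1) ≤ n². (That is, r(K_{n,n}, K_{s,t}, st-⌊t/2⌋+1) = Θ(n²).) -/
open Finset

/-- If every cell of `D` has a same-colored mate outside `D`, removing `D` doesn't
change the color set, so the number of colors on the block is at most its size minus `#D`. -/
lemma block_bound {n : ℕ} (c : Fin n → Fin n → ℕ) (A B : Finset (Fin n))
    (D : Finset (Fin n × Fin n)) (hD : D ⊆ A ×ˢ B)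
    (hrep : ∀ p ∈ D, ∃ q ∈ (A ×ˢ B) \ D, c q.1 q.2 = c p.1 p.2) :
    ((A ×ˢ B).image fun p => c p.1 p.2).card ≤ (A ×ˢ B).card - D.card := by
  have h1 : ((A ×ˢ B).image fun p => c p.1 p.2)
      ⊆ (((A ×ˢ B) \ D).image fun p => c p.1 p.2) := by
    intro x hx
    obtain ⟨p, hp, rfl⟩ := mem_image.1 hx
    by_cases hpD : p ∈ D
    · obtain ⟨q, hq, hcq⟩ := hrep p hpD
      exact mem_image.2 ⟨q, hq, hcq⟩
    · exact mem_image.2 ⟨p, mem_sdiff.2 ⟨hp, hpD⟩, rfl⟩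
  calc ((A ×ˢ B).image fun p => c p.1 p.2).card
      ≤ (((A ×ˢ B) \ D).image fun p => c p.1 p.2).card := card_le_card h1
    _ ≤ ((A ×ˢ B) \ D).card := card_image_le
    _ = (A ×ˢ B).card - D.card := card_sdiff_of_subset hD

/-- In a valid coloring, each color appears at most `⌊t/2⌋` times in each row. -/
lemma row_bound {n s t : ℕ} (hs : 2 ≤ s) (hst : s ≤ t) (hn : t ≤ n)
    (c : Fin n → Fin n → ℕ)
    (H : ∀ A B : Finset (Fin n), A.card = s → B.card = t →
      s * t - t / 2 + 1 ≤ ((A ×ˢ B).image fun p => c p.1 p.2).card)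
    (a : Fin n) (x : ℕ) :
    ((univ : Finset (Fin n)).filter fun b => c a b = x).card ≤ t / 2 := by
  by_contra h
  push_neg at h
  set f := t / 2 with hf
  have hft : f + 1 ≤ t := by omega
  obtain ⟨B₁, hB₁sub, hB₁card⟩ :=
    Finset.exists_subset_card_eq (s := (univ : Finset (Fin n)).filter fun b => c a b = x)
      (n := f + 1) (by omega)
  obtain ⟨B, hB₁B, _, hBcard⟩ :=
    Finset.exists_subsuperset_card_eq (n := t) (B₁.subset_univ) (by omega)
      (by simpa using hn)
  obtain ⟨A, hAsub, _, hAcard⟩ :=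
    Finset.exists_subsuperset_card_eq (n := s) (({a} : Finset (Fin n)).subset_univ)
      (by simp; omega) (by simpa using hst.trans hn)
  have haA : a ∈ A := hAsub (mem_singleton_self a)
  have hB₁ne : B₁.Nonempty := card_pos.1 (by omega)
  obtain ⟨b₀, hb₀⟩ := hB₁ne
  have hcol : ∀ b ∈ B₁, c a b = x := fun b hb => by
    have := hB₁sub hb; simpa using (mem_filter.1 this).2
  set D : Finset (Fin n × Fin n) := {a} ×ˢ (B₁.erase b₀) with hD
  have hDsub : D ⊆ A ×ˢ B := by
    intro p hp
    rw [hD, mem_product] at hp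
    exact mem_product.2 ⟨hAsub hp.1, hB₁B (erase_subset _ _ hp.2)⟩
  have hrep : ∀ p ∈ D, ∃ q ∈ (A ×ˢ B) \ D, c q.1 q.2 = c p.1 p.2 := by
    intro p hp
    rw [hD, mem_product, mem_singleton] at hp
    refine ⟨(a, b₀), mem_sdiff.2 ⟨mem_product.2 ⟨haA, hB₁B hb₀⟩, ?_⟩, ?_⟩
    · rw [hD, mem_product]
      simp
    · simp only
      rw [hcol b₀ hb₀, hp.1, hcol p.2 (erase_subset _ _ hp.2)]
  have hDcard : D.card = f := by
    rw [hD, card_product, card_singleton, card_erase_of_mem hb₀, hB₁card]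
    simp
  have hblock := block_bound c A B D hDsub hrep
  rw [hDcard, card_product, hAcard, hBcard] at hblock
  have hH := H A B hAcard hBcard
  have h1 : t ≤ s * t := Nat.le_mul_of_pos_left t (by omega)
  have h2 : f ≤ t := Nat.div_le_self t 2
  omega

/-- In a valid coloring, two distinct rows share at most `⌊t/2⌋` colors. -/
lemma pair_bound {n s t : ℕ} (hs : 2 ≤ s) (hst : s ≤ t) (hn : t ≤ n)
    (c : Fin n → Fin n → ℕ)
    (H : ∀ A B : Finset (Fin n), A.card = s → B.card = t →
      s * t - t / 2 + 1 ≤ ((A ×ˢ B).image fun p => c p.1 p.2).card)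
    (a a' : Fin n) (haa : a ≠ a') :
    ((univ.image (c a)) ∩ (univ.image (c a'))).card ≤ t / 2 := by
  by_contra h
  push_neg at h
  set f := t / 2 with hf
  have hf1 : 1 ≤ f := by omega
  obtain ⟨S₁, hS₁sub, hS₁card⟩ :=
    Finset.exists_subset_card_eq (s := (univ.image (c a)) ∩ (univ.image (c a')))
      (n := f) (by omega)
  have hn0 : 0 < n := by omega
  set b : ℕ → Fin n :=
    fun x => if h : ∃ β : Fin n, c a β = x then h.choose else ⟨0, hn0⟩ with hb
  set b' : ℕ → Fin n :=
    fun x => if h : ∃ β : Fin n, c a' β = x then h.choose else ⟨0, hn0⟩ with hb'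
  have hbspec : ∀ x ∈ S₁, c a (b x) = x := by
    intro x hx
    obtain ⟨β, _, hβ⟩ := mem_image.1 (mem_inter.1 (hS₁sub hx)).1
    rw [hb]; simp only
    rw [dif_pos ⟨β, hβ⟩]
    exact (⟨β, hβ⟩ : ∃ β : Fin n, c a β = x).choose_spec
  have hb'spec : ∀ x ∈ S₁, c a' (b' x) = x := by
    intro x hx
    obtain ⟨β, _, hβ⟩ := mem_image.1 (mem_inter.1 (hS₁sub hx)).2
    rw [hb']; simp only
    rw [dif_pos ⟨β, hβ⟩]
    exact (⟨β, hβ⟩ : ∃ β : Fin n, c a' β = x).choose_spec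
  set B₀ : Finset (Fin n) := S₁.image b ∪ S₁.image b' with hB₀
  have hB₀card : B₀.card ≤ t := by
    calc B₀.card ≤ (S₁.image b).card + (S₁.image b').card := card_union_le _ _
      _ ≤ f + f := Nat.add_le_add (le_trans card_image_le hS₁card.le)
          (le_trans card_image_le hS₁card.le)
      _ ≤ t := by omega
  obtain ⟨B, hB₀B, _, hBcard⟩ :=
    Finset.exists_subsuperset_card_eq (n := t) (B₀.subset_univ) hB₀card
      (by simpa using hn)
  obtain ⟨A, hAsub, _, hAcard⟩ :=
    Finset.exists_subsuperset_card_eq (n := s) (({a, a'} : Finset (Fin n)).subset_univ)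
      (by
        have : ({a, a'} : Finset (Fin n)).card = 2 := card_pair haa
        omega)
      (by simpa using hst.trans hn)
  have haA : a ∈ A := hAsub (by simp)
  have ha'A : a' ∈ A := hAsub (by simp)
  set D : Finset (Fin n × Fin n) := {a'} ×ˢ (S₁.image b') with hD
  have hb'inj : Set.InjOn b' S₁ := by
    intro x hx y hy hxy
    rw [← hb'spec x hx, ← hb'spec y hy, hxy]
  have hDcard : D.card = f := by
    rw [hD, card_product, card_singleton, card_image_of_injOn hb'inj, hS₁card]
    simp
  have hDsub : D ⊆ A ×ˢ B := by
    intro p hp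
    rw [hD, mem_product] at hp
    have hp1 : p.1 = a' := by simpa using hp.1
    exact mem_product.2 ⟨hAsub (by simp [hp1]),
      hB₀B (mem_union_right _ hp.2)⟩
  have hrep : ∀ p ∈ D, ∃ q ∈ (A ×ˢ B) \ D, c q.1 q.2 = c p.1 p.2 := by
    intro p hp
    rw [hD, mem_product, mem_singleton] at hp
    obtain ⟨x, hxS₁, hbx⟩ := mem_image.1 hp.2
    refine ⟨(a, b x), mem_sdiff.2 ⟨mem_product.2
      ⟨haA, hB₀B (mem_union_left _ (mem_image_of_mem b hxS₁))⟩, ?_⟩, ?_⟩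
    · rw [hD, mem_product, mem_singleton]
      intro hcon
      exact haa hcon.1
    · simp only
      rw [hbspec x hxS₁, hp.1, ← hbx, hb'spec x hxS₁]
  have hblock := block_bound c A B D hDsub hrep
  rw [hDcard, card_product, hAcard, hBcard] at hblock
  have hH := H A B hAcard hBcard
  have h1 : t ≤ s * t := Nat.le_mul_of_pos_left t (by omega)
  have h2 : f ≤ t := Nat.div_le_self t 2
  omega

/-- Counting argument: a valid coloring of `K_{n,n}` needs at least `n²/(f+f³)` colors. -/
lemma count_bound {n s t k : ℕ} (hs : 2 ≤ s) (hst : s ≤ t) (hn : t ≤ n)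
    (c : Fin n → Fin n → ℕ) (hk : ∀ a b, c a b < k)
    (H : ∀ A B : Finset (Fin n), A.card = s → B.card = t →
      s * t - t / 2 + 1 ≤ ((A ×ˢ B).image fun p => c p.1 p.2).card) :
    n ^ 2 ≤ k * (t / 2 + (t / 2) ^ 3) := by
  set f := t / 2 with hf
  have ht2 : 2 ≤ t := hs.trans hst
  have hf1 : 1 ≤ f := by omega
  set R : Fin n → ℕ → ℕ :=
    fun a x => ((univ : Finset (Fin n)).filter fun b => c a b = x).card with hR
  have hrow : ∀ a x, R a x ≤ f := fun a x => row_bound hs hst hn c H a x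
  have hrowsum : ∀ a : Fin n, ∑ x ∈ Finset.range k, R a x = n := by
    intro a
    have := Finset.card_eq_sum_card_fiberwise
      (f := fun b : Fin n => c a b) (s := univ) (t := Finset.range k)
      (fun b _ => Finset.mem_range.2 (hk a b))
    simpa [hR] using this.symm
  set N : ℕ → ℕ := fun x => ∑ a : Fin n, R a x with hN
  have sumN : ∑ x ∈ Finset.range k, N x = n ^ 2 := by
    rw [hN, Finset.sum_comm]
    simp [hrowsum, sq]
  -- off-diagonal bound
  have hoff : ∀ a a' : Fin n, a ≠ a' →
      ∑ x ∈ Finset.range k, R a x * R a' x ≤ f * (f * f) := by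
    intro a a' haa
    set s' := (Finset.range k).filter fun x => 0 < R a x ∧ 0 < R a' x with hs'
    have hsub : ∑ x ∈ s', R a x * R a' x = ∑ x ∈ Finset.range k, R a x * R a' x := by
      apply Finset.sum_subset (filter_subset _ _)
      intro x hx hxs'
      have : R a x = 0 ∨ R a' x = 0 := by
        by_contra hcon
        push_neg at hcon
        exact hxs' (mem_filter.2 ⟨hx,
          Nat.pos_of_ne_zero hcon.1, Nat.pos_of_ne_zero hcon.2⟩)
      rcases this with h | h <;> simp [h]
    have hcard : s'.card ≤ f := by
      have hsubS : s' ⊆ (univ.image (c a)) ∩ (univ.image (c a')) := by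
        intro x hx
        rw [hs', mem_filter] at hx
        obtain ⟨b₁, hb₁⟩ := card_pos.1 hx.2.1
        obtain ⟨b₂, hb₂⟩ := card_pos.1 hx.2.2
        rw [mem_filter] at hb₁ hb₂
        exact mem_inter.2 ⟨mem_image.2 ⟨b₁, mem_univ _, hb₁.2⟩,
          mem_image.2 ⟨b₂, mem_univ _, hb₂.2⟩⟩
      exact le_trans (card_le_card hsubS) (pair_bound hs hst hn c H a a' haa)
    calc ∑ x ∈ Finset.range k, R a x * R a' x
        = ∑ x ∈ s', R a x * R a' x := hsub.symm
      _ ≤ s'.card • (f * f) := Finset.sum_le_card_nsmul _ _ _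
          (fun x _ => Nat.mul_le_mul (hrow a x) (hrow a' x))
      _ = s'.card * (f * f) := by rw [smul_eq_mul]
      _ ≤ f * (f * f) := by exact Nat.mul_le_mul_right _ hcard
  -- diagonal bound
  have hdiag : ∀ a : Fin n, ∑ x ∈ Finset.range k, R a x * R a x ≤ f * n := by
    intro a
    calc ∑ x ∈ Finset.range k, R a x * R a x
        ≤ ∑ x ∈ Finset.range k, f * R a x := by
          apply Finset.sum_le_sum
          intro x _
          exact Nat.mul_le_mul_right _ (hrow a x)
      _ = f * ∑ x ∈ Finset.range k, R a x := by rw [Finset.mul_sum]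
      _ = f * n := by rw [hrowsum a]
  have sumNsq : ∑ x ∈ Finset.range k, (N x) ^ 2 ≤ n ^ 2 * (f + f ^ 3) := by
    have hNx : ∀ x, (N x) ^ 2 = ∑ a : Fin n, ∑ a' : Fin n, R a x * R a' x := by
      intro x
      rw [hN, sq, Finset.sum_mul_sum]
    calc ∑ x ∈ Finset.range k, (N x) ^ 2
        = ∑ a : Fin n, ∑ a' : Fin n, ∑ x ∈ Finset.range k, R a x * R a' x := by
          simp_rw [hNx]
          rw [Finset.sum_comm]
          congr 1
          ext a
          rw [Finset.sum_comm]
      _ ≤ ∑ a : Fin n, (f * n + (n - 1) * (f * (f * f))) := by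
          apply Finset.sum_le_sum
          intro a _
          rw [← Finset.add_sum_erase _ _ (mem_univ a)]
          gcongr
          · exact hdiag a
          · calc ∑ a' ∈ univ.erase a, ∑ x ∈ Finset.range k, R a x * R a' x
                ≤ (univ.erase a).card • (f * (f * f)) :=
                  Finset.sum_le_card_nsmul _ _ _
                    (fun a' ha' => hoff a a' (Ne.symm (ne_of_mem_erase ha')))
              _ = (n - 1) * (f * (f * f)) := by
                  rw [smul_eq_mul, card_erase_of_mem (mem_univ a), card_univ,
                    Fintype.card_fin]
      _ ≤ n ^ 2 * (f + f ^ 3) := by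
          rw [Finset.sum_const, card_univ, Fintype.card_fin, smul_eq_mul]
          have h1 : n - 1 ≤ n := Nat.sub_le n 1
          calc n * (f * n + (n - 1) * (f * (f * f)))
              ≤ n * (f * n + n * (f * (f * f))) := by gcongr
            _ = n ^ 2 * (f + f ^ 3) := by ring
  -- Cauchy–Schwarz over ℤ
  have hCS : ((∑ x ∈ Finset.range k, N x : ℕ) : ℤ) ^ 2
      ≤ (k : ℤ) * ∑ x ∈ Finset.range k, ((N x : ℕ) : ℤ) ^ 2 := by
    have := sq_sum_le_card_mul_sum_sq (s := Finset.range k)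
      (f := fun x => ((N x : ℕ) : ℤ))
    simpa [Nat.cast_sum] using this
  have key : (n ^ 2) * (n ^ 2) ≤ (k * (f + f ^ 3)) * n ^ 2 := by
    have h1 : ((n : ℤ) ^ 2) ^ 2 ≤ (k : ℤ) * ((n : ℤ) ^ 2 * ((f : ℤ) + (f : ℤ) ^ 3)) := by
      calc ((n : ℤ) ^ 2) ^ 2
          = ((∑ x ∈ Finset.range k, N x : ℕ) : ℤ) ^ 2 := by
            rw [sumN]; push_cast; ring
        _ ≤ (k : ℤ) * ∑ x ∈ Finset.range k, ((N x : ℕ) : ℤ) ^ 2 := hCS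
        _ ≤ (k : ℤ) * ((n : ℤ) ^ 2 * ((f : ℤ) + (f : ℤ) ^ 3)) := by
            gcongr
            have := sumNsq
            calc ∑ x ∈ Finset.range k, ((N x : ℕ) : ℤ) ^ 2
                = ((∑ x ∈ Finset.range k, (N x) ^ 2 : ℕ) : ℤ) := by push_cast; ring
              _ ≤ ((n ^ 2 * (f + f ^ 3) : ℕ) : ℤ) := by exact_mod_cast this
              _ = (n : ℤ) ^ 2 * ((f : ℤ) + (f : ℤ) ^ 3) := by push_cast; ring
    have h2 : ((n ^ 2 * n ^ 2 : ℕ) : ℤ) ≤ ((k * (f + f ^ 3) * n ^ 2 : ℕ) : ℤ) := by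
      push_cast
      linarith
    exact_mod_cast h2
  have hn2pos : 0 < n ^ 2 := Nat.pow_pos (by omega)
  exact Nat.le_of_mul_le_mul_right key hn2pos

/-- Injectivity of the base-`n` encoding. -/
lemma encode_inj {n a a' b b' : ℕ} (hb : b < n) (hb' : b' < n)
    (h : a * n + b = a' * n + b') : a = a' ∧ b = b' := by
  have hn : 0 < n := by omega
  have h1 : (a * n + b) / n = a := by
    rw [mul_comm, Nat.mul_add_div hn, Nat.div_eq_of_lt hb, add_zero]
  have h2 : (a' * n + b') / n = a' := by
    rw [mul_comm, Nat.mul_add_div hn, Nat.div_eq_of_lt hb', add_zero]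
  have h3 : (a * n + b) % n = b := by
    rw [mul_comm, Nat.mul_add_mod, Nat.mod_eq_of_lt hb]
  have h4 : (a' * n + b') % n = b' := by
    rw [mul_comm, Nat.mul_add_mod, Nat.mod_eq_of_lt hb']
  constructor
  · rw [← h1, ← h2, h]
  · rw [← h3, ← h4, h]

/-- For `2 ≤ s ≤ 3` and `t ≥ s`, `r(K_{n,n}, K_{s,t}, st - ⌊t/2⌋ + 1) = Θ(n²)`. -/
theorem stmt_5 (s t : ℕ) (hs : 2 ≤ s) (hs' : s ≤ 3) (hst : s ≤ t) :
    ∃ c : ℝ, 0 < c ∧ ∃ n₀ : ℕ, ∀ n : ℕ, n₀ ≤ n →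
      c * (n : ℝ) ^ 2 ≤ (rBip n s t (s * t - t / 2 + 1) : ℝ) ∧
      (rBip n s t (s * t - t / 2 + 1) : ℝ) ≤ (n : ℝ) ^ 2 := by
  set f := t / 2 with hf
  have ht2 : 2 ≤ t := hs.trans hst
  have hf1 : 1 ≤ f := by omega
  set F : ℕ := f + f ^ 3 with hF
  have hFpos : 0 < F := Nat.add_pos_left (by omega) _
  refine ⟨1 / (F : ℝ), by positivity, t, fun n hn => ?_⟩
  have hn0 : 0 < n := by omega
  -- membership of n² in the defining set, via the all-distinct coloring
  have hmem : n ^ 2 ∈ {k : ℕ | ∃ c : Fin n → Fin n → ℕ,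
      (∀ a b, c a b < k) ∧
      ∀ A B : Finset (Fin n),
        (A.card = s ∧ B.card = t) ∨ (A.card = t ∧ B.card = s) →
        (s * t - t / 2 + 1) ≤ ((A ×ˢ B).image fun p => c p.1 p.2).card} := by
    refine ⟨fun a b => a.val * n + b.val, fun a b => ?_, fun A B hAB => ?_⟩
    · have h1 : a.val + 1 ≤ n := a.isLt
      have h2 : b.val < n := b.isLt
      calc a.val * n + b.val < a.val * n + n := by omega
        _ = (a.val + 1) * n := by ring
        _ ≤ n * n := Nat.mul_le_mul_right n h1
        _ = n ^ 2 := (sq n).symm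
    · have hinj : Set.InjOn (fun p : Fin n × Fin n => p.1.val * n + p.2.val)
          (A ×ˢ B : Finset (Fin n × Fin n)) := by
        intro p _ q _ hpq
        obtain ⟨h1, h2⟩ := encode_inj p.2.isLt q.2.isLt hpq
        exact Prod.ext (Fin.ext h1) (Fin.ext h2)
      rw [card_image_of_injOn hinj, card_product]
      have htst : t ≤ s * t := Nat.le_mul_of_pos_left t (by omega)
      rcases hAB with ⟨hA, hB⟩ | ⟨hA, hB⟩
      · rw [hA, hB]; omega
      · rw [hA, hB, mul_comm t s]; omega
  have hne : {k : ℕ | ∃ c : Fin n → Fin n → ℕ,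
      (∀ a b, c a b < k) ∧
      ∀ A B : Finset (Fin n),
        (A.card = s ∧ B.card = t) ∨ (A.card = t ∧ B.card = s) →
        (s * t - t / 2 + 1) ≤ ((A ×ˢ B).image fun p => c p.1 p.2).card}.Nonempty :=
    ⟨n ^ 2, hmem⟩
  have hupper : rBip n s t (s * t - t / 2 + 1) ≤ n ^ 2 := Nat.sInf_le hmem
  have hlow : n ^ 2 ≤ rBip n s t (s * t - t / 2 + 1) * F := by
    obtain ⟨c, hk, H⟩ := Nat.sInf_mem hne
    exact count_bound hs hst hn c hk
      (fun A B hA hB => H A B (Or.inl ⟨hA, hB⟩))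
  constructor
  · rw [div_mul_eq_mul_div, one_mul, div_le_iff₀ (by exact_mod_cast hFpos)]
    calc ((n : ℝ)) ^ 2 = ((n ^ 2 : ℕ) : ℝ) := by push_cast; ring
      _ ≤ ((rBip n s t (s * t - t / 2 + 1) * F : ℕ) : ℝ) := by exact_mod_cast hlow
      _ = (rBip n s t (s * t - t / 2 + 1) : ℝ) * (F : ℝ) := by push_cast; ring
  · have : ((rBip n s t (s * t - t / 2 + 1) : ℕ) : ℝ) ≤ ((n ^ 2 : ℕ) : ℝ) :=
      Nat.cast_le.2 hupper
    calc (rBip n s t (s * t - t / 2 + 1) : ℝ)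
        ≤ ((n ^ 2 : ℕ) : ℝ) := this
      _ = (n : ℝ) ^ 2 := by push_cast; ring
end

section
/- (a) For any integer s ≥ 2, there exist a constant c > 0 and a natural number n₀ such that for all n ≥ n₀, c·n² ≤ r(K_{n,n}, K_{s,s+1}, s(s+1) - ⌊(2s+1)/2⌋ + 2) ≤ n². (b) For any integer t ≥ 2, there exist a constant c > 0 and a natural number n₀ such that for all n ≥ n₀, c·n² ≤ r(K_{n,n}, K_{2,t}, 2t - ⌊(2+t)/2⌋ + 2) ≤ n². (c) For any even integer t ≥ 4, there exist a constant c > 0 and a natural number n₀ such that for all n ≥ n₀, c·n² ≤ r(K_{n,n}, K_{3,t}, 3t - ⌊(3+t)/2⌋ + 2) ≤ n². -/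
/-! Write `m = s t + 1 - q`. Any set `E` of edges spanning at most `s` rows and `t` columns extends
to a copy of `K_{s,t}`, whose other `s t - |E|` edges add at most as many colors; hence `E` has
fewer than `m + |c(E)|` edges. In case (a) (`m = s - 1`) this bounds every color class by `m`. In
cases (b) and (c) (`2 m ≤ t`) it bounds the multiplicity of a color in a row by `m`, and it forbids,
for two rows `a ≠ a'`, a matching of `m` pairs `(b, b')` with `c(a, b) = c(a', b')`; the greedy
bound for bipartite graphs with small degrees and small matchings then leaves `O(m²)` such pairs.
Either way there are `O(n²)` ordered pairs of edges of equal color, and Cauchy–Schwarz turns this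
into `Ω(n²)` colors. The injective coloring gives the upper bound. -/

open Finset

variable {ι α β γ : Type*}

section Collisions

variable [DecidableEq γ] [Fintype ι]

def collisionCount (f : ι → γ) : ℕ := #{p : ι × ι | f p.1 = f p.2}

lemma collisionCount_eq_sum_card_fiber (f : ι → γ) :
    collisionCount f = ∑ x, #{y | f y = f x} := by
  simp only [collisionCount, card_filter, Fintype.sum_prod_type]
  exact sum_congr rfl fun x _ => sum_congr rfl fun y _ => by simp only [eq_comm]

lemma collisionCount_le_of_card_fiber_le {f : ι → γ} {C : ℕ} (h : ∀ x, #{y | f y = f x} ≤ C) :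
    collisionCount f ≤ Fintype.card ι * C := by
  rw [collisionCount_eq_sum_card_fiber]
  exact (sum_le_sum fun x _ => h x).trans (by simp)

lemma sq_card_le_card_image_mul_collisionCount (f : ι → γ) :
    Fintype.card ι ^ 2 ≤ #(univ.image f) * collisionCount f := by
  have hfiber : ∀ x, #{p : ι × ι | f p.1 = f p.2 ∧ f p.1 = x} = #{i | f i = x} ^ 2 := by
    intro x
    rw [sq, ← card_product]
    congr 1
    ext p
    simp only [mem_filter, mem_univ, true_and, mem_product]
    constructor
    · rintro ⟨h, rfl⟩
      exact ⟨rfl, h.symm⟩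
    · rintro ⟨h₁, h₂⟩
      exact ⟨h₁.trans h₂.symm, h₁⟩
  calc Fintype.card ι ^ 2 = (∑ x ∈ univ.image f, #{i | f i = x}) ^ 2 := by
        rw [← card_eq_sum_card_image, card_univ]
    _ ≤ #(univ.image f) * ∑ x ∈ univ.image f, #{i | f i = x} ^ 2 := sq_sum_le_card_mul_sum_sq
    _ = #(univ.image f) * collisionCount f := by
        rw [collisionCount, card_eq_sum_card_fiberwise (f := fun p : ι × ι => f p.1)
          (t := univ.image f) fun p _ => mem_image_of_mem f (mem_univ _)]
        simp only [filter_filter, hfiber]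

lemma collisionCount_uncurry_eq_sum [Fintype α] [Fintype β] (c : α → β → γ) :
    collisionCount (Function.uncurry c) = ∑ a, ∑ a', #{w : β × β | c a w.1 = c a' w.2} := by
  simp only [collisionCount, card_filter, Fintype.sum_prod_type, Function.uncurry_apply_pair]
  exact sum_congr rfl fun a _ => sum_comm

end Collisions

lemma card_le_of_card_fiber_le_of_matching_le [DecidableEq α] [DecidableEq β]
    {E : Finset (α × β)} {D L : ℕ} (hfst : ∀ x, #{e ∈ E | e.1 = x} ≤ D)
    (hsnd : ∀ y, #{e ∈ E | e.2 = y} ≤ D)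
    (hmatch : ∀ M ⊆ E, (M : Set (α × β)).Pairwise (fun e f => e.1 ≠ f.1 ∧ e.2 ≠ f.2) →
      #M ≤ L) :
    #E ≤ L * (2 * D) := by
  induction L generalizing E with
  | zero =>
    rcases E.eq_empty_or_nonempty with rfl | ⟨e, he⟩
    · simp
    · simpa using hmatch {e} (singleton_subset_iff.2 he) (by simp)
  | succ L ih =>
    rcases E.eq_empty_or_nonempty with rfl | ⟨e, he⟩
    · simp
    set E' := {f ∈ E | f.1 ≠ e.1 ∧ f.2 ≠ e.2}
    have hE'E : E' ⊆ E := filter_subset _ _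
    have hE' : #E' ≤ L * (2 * D) := by
      refine ih (fun x => (card_le_card (filter_subset_filter _ hE'E)).trans (hfst x))
        (fun y => (card_le_card (filter_subset_filter _ hE'E)).trans (hsnd y)) fun M hM hMm => ?_
      have heM : e ∉ M := fun h => (mem_filter.1 (hM h)).2.1 rfl
      have hins : ((insert e M : Finset (α × β)) : Set (α × β)).Pairwise
          (fun e f => e.1 ≠ f.1 ∧ e.2 ≠ f.2) := by
        rw [coe_insert, Set.pairwise_insert]
        refine ⟨hMm, fun f hf _ => ?_⟩
        obtain ⟨h₁, h₂⟩ := (mem_filter.1 (hM hf)).2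
        exact ⟨⟨Ne.symm h₁, Ne.symm h₂⟩, h₁, h₂⟩
      have := hmatch _ (insert_subset he (hM.trans hE'E)) hins
      rw [card_insert_of_notMem heM] at this
      omega
    have hcover : E ⊆ E' ∪ {f ∈ E | f.1 = e.1} ∪ {f ∈ E | f.2 = e.2} := by
      intro f hf
      simp only [E', mem_union, mem_filter]
      tauto
    calc #E ≤ #(E' ∪ {f ∈ E | f.1 = e.1} ∪ {f ∈ E | f.2 = e.2}) := card_le_card hcover
      _ ≤ #E' + #{f ∈ E | f.1 = e.1} + #{f ∈ E | f.2 = e.2} :=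
          (card_union_le _ _).trans (Nat.add_le_add_right (card_union_le _ _) _)
      _ ≤ L * (2 * D) + D + D := Nat.add_le_add (Nat.add_le_add hE' (hfst e.1)) (hsnd e.2)
      _ = (L + 1) * (2 * D) := by ring

section BicliqueColoring

variable [DecidableEq γ]

def IsBicliqueColoring (s t q : ℕ) (c : α → α → γ) : Prop :=
  ∀ A B : Finset α, (#A = s ∧ #B = t) ∨ (#A = t ∧ #B = s) →
    q ≤ #((A ×ˢ B).image (Function.uncurry c))

variable {s t q m : ℕ} {c : α → α → γ}

lemma isBicliqueColoring_of_injective (hc : Function.Injective (Function.uncurry c))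
    (hq : q ≤ s * t) : IsBicliqueColoring s t q c := by
  rintro A B (⟨hA, hB⟩ | ⟨hA, hB⟩) <;> rw [card_image_of_injective _ hc, card_product, hA, hB]
  exacts [hq, hq.trans_eq (mul_comm s t)]

namespace IsBicliqueColoring

variable [Fintype α] [DecidableEq α]

lemma card_lt_add_card_image (hc : IsBicliqueColoring s t q c) (hm : s * t < m + q)
    (hs : s ≤ Fintype.card α) (ht : t ≤ Fintype.card α) {E : Finset (α × α)}
    (hE₁ : #(E.image Prod.fst) ≤ s) (hE₂ : #(E.image Prod.snd) ≤ t) :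
    #E < m + #(E.image (Function.uncurry c)) := by
  obtain ⟨A, hA, rfl⟩ := exists_superset_card_eq hE₁ hs
  obtain ⟨B, hB, rfl⟩ := exists_superset_card_eq hE₂ ht
  have hEAB : E ⊆ A ×ˢ B := fun e he =>
    mem_product.2 ⟨hA (mem_image_of_mem _ he), hB (mem_image_of_mem _ he)⟩
  have hcopy : #((A ×ˢ B).image (Function.uncurry c)) ≤
      #(E.image (Function.uncurry c)) + (#A * #B - #E) :=
    calc #((A ×ˢ B).image (Function.uncurry c))
        = #(E.image (Function.uncurry c) ∪ ((A ×ˢ B) \ E).image (Function.uncurry c)) := by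
          rw [← image_union, union_sdiff_of_subset hEAB]
      _ ≤ #(E.image (Function.uncurry c)) + #(((A ×ˢ B) \ E).image (Function.uncurry c)) :=
          card_union_le _ _
      _ ≤ #(E.image (Function.uncurry c)) + (#A * #B - #E) := by
          rw [← card_product A B, ← card_sdiff_of_subset hEAB]
          exact Nat.add_le_add_left card_image_le _
  have hE := card_le_card hEAB
  rw [card_product] at hE
  have := hc A B (Or.inl ⟨rfl, rfl⟩)
  omega

lemma card_le_of_forall_eq (hc : IsBicliqueColoring s t q c) (hm : s * t < m + q)
    (hs : s ≤ Fintype.card α) (ht : t ≤ Fintype.card α) {E : Finset (α × α)}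
    (hE₁ : #(E.image Prod.fst) ≤ s) (hE₂ : #(E.image Prod.snd) ≤ t) {x : γ}
    (hx : ∀ e ∈ E, c e.1 e.2 = x) : #E ≤ m := by
  have hcolors : #(E.image (Function.uncurry c)) ≤ 1 :=
    card_le_one.2 fun y hy z hz => by
      obtain ⟨e, he, rfl⟩ := mem_image.1 hy
      obtain ⟨f, hf, rfl⟩ := mem_image.1 hz
      exact (hx e he).trans (hx f hf).symm
  have := hc.card_lt_add_card_image hm hs ht hE₁ hE₂
  omega

lemma card_row_fiber_le (hc : IsBicliqueColoring s t q c) (hm : s * t < m + q) (hs₀ : 0 < s)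
    (hmt : m < t) (hs : s ≤ Fintype.card α) (ht : t ≤ Fintype.card α) (a : α) (x : γ) :
    #{b | c a b = x} ≤ m := by
  by_contra! h
  obtain ⟨W, hW, hWcard⟩ := exists_subset_card_eq (n := m + 1) h
  have hrow : (W.image fun b => (a, b)).image Prod.snd = W := by
    rw [image_image]
    exact image_id
  have := hc.card_le_of_forall_eq hm hs ht (E := W.image fun b => (a, b))
    ((card_le_one.2 fun y hy z hz => by simp_all).trans hs₀) (by rw [hrow]; omega)
    (x := x) (by simpa using fun b hb => (mem_filter.1 (hW hb)).2)
  rw [card_image_of_injective _ (Prod.mk_right_injective a)] at this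
  omega

lemma card_colorClass_le (hc : IsBicliqueColoring s t q c) (hm : s * t < m + q) (hms : m < s)
    (hst : s ≤ t) (ht : t ≤ Fintype.card α) (x : γ) :
    #{e : α × α | Function.uncurry c e = x} ≤ m := by
  by_contra! h
  obtain ⟨E, hE, hEcard⟩ := exists_subset_card_eq (n := m + 1) h
  have := hc.card_le_of_forall_eq hm (hst.trans ht) ht (E := E) (card_image_le.trans (by omega))
    (card_image_le.trans (by omega)) (x := x) fun e he => (mem_filter.1 (hE he)).2
  omega

/-- The `2 #M` edges `(a, b)`, `(a', b')` with `(b, b') ∈ M` carry at most `#M` colors. -/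
lemma card_matching_lt (hc : IsBicliqueColoring s t q c) (hm : s * t < m + q) (hs₂ : 2 ≤ s)
    (hs : s ≤ Fintype.card α) (ht : t ≤ Fintype.card α) {a a' : α} (ha : a ≠ a')
    {M : Finset (α × α)} (hM : ∀ w ∈ M, c a w.1 = c a' w.2)
    (hmatch : (M : Set (α × α)).Pairwise (fun e f => e.1 ≠ f.1 ∧ e.2 ≠ f.2))
    (hMt : 2 * #M ≤ t) : #M < m := by
  set E := M.image (fun w => (a, w.1)) ∪ M.image (fun w => (a', w.2))
  have hE : #E = 2 * #M := by
    have hdisj : Disjoint (M.image fun w => (a, w.1)) (M.image fun w => (a', w.2)) :=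
      disjoint_left.2 fun e he he' => by
        obtain ⟨w, -, rfl⟩ := mem_image.1 he
        obtain ⟨w', -, h⟩ := mem_image.1 he'
        exact ha (congrArg Prod.fst h).symm
    have h₁ : #(M.image fun w => (a, w.1)) = #M := card_image_of_injOn fun w hw w' hw' h => by
      by_contra hne
      exact (hmatch hw hw' hne).1 (congrArg Prod.snd h)
    have h₂ : #(M.image fun w => (a', w.2)) = #M := card_image_of_injOn fun w hw w' hw' h => by
      by_contra hne
      exact (hmatch hw hw' hne).2 (by simpa using h)
    rw [card_union_of_disjoint hdisj, h₁, h₂, two_mul]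
  have hE₁ : #(E.image Prod.fst) ≤ s := by
    refine (card_le_card fun x hx => ?_).trans ((card_pair ha).trans_le hs₂)
    simp only [E, mem_image, mem_union] at hx
    obtain ⟨e, ⟨w, -, rfl⟩ | ⟨w, -, rfl⟩, rfl⟩ := hx <;> simp
  have hE₂ : #(E.image Prod.snd) ≤ t := by
    rw [image_union, image_image, image_image]
    exact (card_union_le _ _).trans ((Nat.add_le_add card_image_le card_image_le).trans (by omega))
  have hcolors : #(E.image (Function.uncurry c)) ≤ #M := by
    refine (card_le_card fun x hx => ?_).trans (card_image_le (f := fun w => c a w.1))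
    simp only [E, mem_image, mem_union] at hx
    obtain ⟨e, ⟨w, hw, rfl⟩ | ⟨w, hw, rfl⟩, rfl⟩ := hx
    exacts [mem_image_of_mem _ hw, mem_image.2 ⟨w, hw, hM w hw⟩]
  have := hc.card_lt_add_card_image hm hs ht hE₁ hE₂
  omega

lemma card_filter_apply_eq_apply_le (hc : IsBicliqueColoring s t q c) (hm : s * t < m + q)
    (hs₂ : 2 ≤ s) (hm₀ : 0 < m) (hmt : 2 * m ≤ t) (hs : s ≤ Fintype.card α)
    (ht : t ≤ Fintype.card α) {a a' : α} (ha : a ≠ a') :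
    #{w : α × α | c a w.1 = c a' w.2} ≤ m * (2 * m) := by
  apply card_le_of_card_fiber_le_of_matching_le
  · intro x
    calc #{w ∈ {w : α × α | c a w.1 = c a' w.2} | w.1 = x}
        ≤ #(({y | c a' y = c a x} : Finset α).image fun y => (x, y)) :=
          card_le_card fun w hw => by
            simp only [mem_filter, mem_univ, true_and] at hw
            exact mem_image.2 ⟨w.2, by simp [← hw.1, hw.2], by simp [← hw.2]⟩
      _ ≤ m := card_image_le.trans (hc.card_row_fiber_le hm (by omega) (by omega) hs ht a' _)
  · intro y
    calc #{w ∈ {w : α × α | c a w.1 = c a' w.2} | w.2 = y}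
        ≤ #(({x | c a x = c a' y} : Finset α).image fun x => (x, y)) :=
          card_le_card fun w hw => by
            simp only [mem_filter, mem_univ, true_and] at hw
            exact mem_image.2 ⟨w.1, by simp [hw.1, hw.2], by simp [← hw.2]⟩
      _ ≤ m := card_image_le.trans (hc.card_row_fiber_le hm (by omega) (by omega) hs ht a _)
  · intro M hM hmatch
    by_contra! h
    obtain ⟨M', hM', hM'card⟩ := exists_subset_card_eq h.le
    have := hc.card_matching_lt hm hs₂ hs ht ha (M := M')
      (fun w hw => (mem_filter.1 (hM (hM' hw))).2) (hmatch.mono hM') (by omega)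
    omega

lemma collisionCount_le_of_lt (hc : IsBicliqueColoring s t q c) (hm : s * t < m + q)
    (hms : m < s) (hst : s ≤ t) (ht : t ≤ Fintype.card α) :
    collisionCount (Function.uncurry c) ≤ Fintype.card α * Fintype.card α * m := by
  rw [← Fintype.card_prod]
  exact collisionCount_le_of_card_fiber_le fun e => hc.card_colorClass_le hm hms hst ht _

lemma collisionCount_le_of_two_mul_le (hc : IsBicliqueColoring s t q c) (hm : s * t < m + q)
    (hs₂ : 2 ≤ s) (hm₀ : 0 < m) (hmt : 2 * m ≤ t) (hs : s ≤ Fintype.card α)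
    (ht : t ≤ Fintype.card α) :
    collisionCount (Function.uncurry c) ≤
      Fintype.card α * Fintype.card α * (m + m * (2 * m)) := by
  rw [collisionCount_uncurry_eq_sum]
  calc ∑ a, ∑ a', #{w : α × α | c a w.1 = c a' w.2}
      ≤ ∑ a : α, ∑ a' : α, ((if a = a' then Fintype.card α * m else 0) + m * (2 * m)) := by
        gcongr with a _ a' _
        split_ifs with h
        · subst h
          exact (collisionCount_le_of_card_fiber_le fun b =>
            hc.card_row_fiber_le hm (by omega) (by omega) hs ht a _).trans (by omega)
        · exact (hc.card_filter_apply_eq_apply_le hm hs₂ hm₀ hmt hs ht h).trans (by omega)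
    _ = Fintype.card α * Fintype.card α * (m + m * (2 * m)) := by
        simp only [sum_add_distrib, sum_ite_eq, mem_univ, if_true, sum_const, card_univ,
          smul_eq_mul]
        ring

end IsBicliqueColoring

end BicliqueColoring

section rBip

variable {n s t q : ℕ}

lemma exists_isBicliqueColoring_lt_mul_self (n : ℕ) (hq : q ≤ s * t) :
    ∃ c : Fin n → Fin n → ℕ, (∀ a b, c a b < n * n) ∧ IsBicliqueColoring s t q c :=
  ⟨fun a b => finProdFinEquiv (a, b), fun a b => (finProdFinEquiv (a, b)).isLt,
    isBicliqueColoring_of_injective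
      (fun _ _ h => finProdFinEquiv.injective (Fin.ext h)) hq⟩

lemma rBip_le_mul_self (hq : q ≤ s * t) : rBip n s t q ≤ n * n :=
  Nat.sInf_le (exists_isBicliqueColoring_lt_mul_self n hq)

lemma exists_isBicliqueColoring_lt_rBip (hq : q ≤ s * t) :
    ∃ c : Fin n → Fin n → ℕ, (∀ a b, c a b < rBip n s t q) ∧ IsBicliqueColoring s t q c :=
  Nat.sInf_mem (s := {k | ∃ c : Fin n → Fin n → ℕ, (∀ a b, c a b < k) ∧ IsBicliqueColoring s t q c})
    ⟨_, exists_isBicliqueColoring_lt_mul_self n hq⟩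

lemma mul_self_le_mul_rBip {C : ℕ} (hq : q ≤ s * t)
    (hC : ∀ c : Fin n → Fin n → ℕ, IsBicliqueColoring s t q c →
      collisionCount (Function.uncurry c) ≤ n * n * C) :
    n * n ≤ C * rBip n s t q := by
  obtain ⟨c, hlt, hc⟩ := exists_isBicliqueColoring_lt_rBip hq
  have hcolors : #(univ.image (Function.uncurry c)) ≤ rBip n s t q :=
    (card_le_card (image_subset_iff.2 fun e _ => mem_range.2 (hlt e.1 e.2))).trans_eq
      (card_range _)
  have hcs := sq_card_le_card_image_mul_collisionCount (Function.uncurry c)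
  rw [Fintype.card_prod, Fintype.card_fin] at hcs
  rcases Nat.eq_zero_or_pos n with rfl | hn
  · simp
  refine Nat.le_of_mul_le_mul_left ?_ (Nat.mul_pos hn hn)
  calc n * n * (n * n) = (n * n) ^ 2 := (sq _).symm
    _ ≤ #(univ.image (Function.uncurry c)) * collisionCount (Function.uncurry c) := hcs
    _ ≤ rBip n s t q * (n * n * C) := Nat.mul_le_mul hcolors (hC c hc)
    _ = n * n * (C * rBip n s t q) := by ring

lemma rBip_bounds_of_collisionCount_le {C : ℕ} (hC₀ : 0 < C) (hq : q ≤ s * t)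
    (hC : ∀ c : Fin n → Fin n → ℕ, IsBicliqueColoring s t q c →
      collisionCount (Function.uncurry c) ≤ n * n * C) :
    1 / (C : ℝ) * (n : ℝ) ^ 2 ≤ (rBip n s t q : ℝ) ∧ (rBip n s t q : ℝ) ≤ (n : ℝ) ^ 2 := by
  have hlow : ((n * n : ℕ) : ℝ) ≤ ((C * rBip n s t q : ℕ) : ℝ) :=
    Nat.cast_le.2 (mul_self_le_mul_rBip hq hC)
  have hup : ((rBip n s t q : ℕ) : ℝ) ≤ ((n * n : ℕ) : ℝ) := Nat.cast_le.2 (rBip_le_mul_self hq)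
  push_cast at hlow hup
  have hC₀' : (0 : ℝ) < C := Nat.cast_pos.2 hC₀
  constructor
  · rw [one_div_mul_eq_div, div_le_iff₀ hC₀']
    nlinarith
  · nlinarith

lemma exists_bounds_rBip_of_lt {m : ℕ} (hm : s * t < m + q) (hq : q ≤ s * t) (hm₀ : 0 < m)
    (hms : m < s) (hst : s ≤ t) :
    ∃ C : ℝ, 0 < C ∧ ∃ n₀ : ℕ, ∀ n : ℕ, n₀ ≤ n →
      C * (n : ℝ) ^ 2 ≤ (rBip n s t q : ℝ) ∧ (rBip n s t q : ℝ) ≤ (n : ℝ) ^ 2 :=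
  ⟨1 / (m : ℝ), by positivity, t, fun n hn =>
    rBip_bounds_of_collisionCount_le hm₀ hq fun c hc => by
      simpa using hc.collisionCount_le_of_lt hm hms hst (by simpa using hn)⟩

lemma exists_bounds_rBip_of_two_mul_le {m : ℕ} (hm : s * t < m + q) (hq : q ≤ s * t)
    (hs₂ : 2 ≤ s) (hm₀ : 0 < m) (hmt : 2 * m ≤ t) (hst : s ≤ t) :
    ∃ C : ℝ, 0 < C ∧ ∃ n₀ : ℕ, ∀ n : ℕ, n₀ ≤ n →
      C * (n : ℝ) ^ 2 ≤ (rBip n s t q : ℝ) ∧ (rBip n s t q : ℝ) ≤ (n : ℝ) ^ 2 :=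
  ⟨1 / ((m + m * (2 * m) : ℕ) : ℝ), by positivity, t, fun n hn =>
    rBip_bounds_of_collisionCount_le (by positivity) hq fun c hc => by
      simpa using hc.collisionCount_le_of_two_mul_le hm hs₂ hm₀ hmt (by simpa using hst.trans hn)
        (by simpa using hn)⟩

end rBip

/-- (a) For `s ≥ 2`, `r(K_{n,n}, K_{s,s+1}, s(s+1) - ⌊(2s+1)/2⌋ + 2) = Θ(n²)`;
(b) for `t ≥ 2`, `r(K_{n,n}, K_{2,t}, 2t - ⌊(2+t)/2⌋ + 2) = Θ(n²)`;
(c) for even `t ≥ 4`, `r(K_{n,n}, K_{3,t}, 3t - ⌊(3+t)/2⌋ + 2) = Θ(n²)`. -/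
theorem stmt_7 :
    (∀ s : ℕ, 2 ≤ s →
      ∃ c : ℝ, 0 < c ∧ ∃ n₀ : ℕ, ∀ n : ℕ, n₀ ≤ n →
        c * (n : ℝ) ^ 2 ≤ (rBip n s (s + 1) (s * (s + 1) - (2 * s + 1) / 2 + 2) : ℝ) ∧
        (rBip n s (s + 1) (s * (s + 1) - (2 * s + 1) / 2 + 2) : ℝ) ≤ (n : ℝ) ^ 2) ∧
    (∀ t : ℕ, 2 ≤ t →
      ∃ c : ℝ, 0 < c ∧ ∃ n₀ : ℕ, ∀ n : ℕ, n₀ ≤ n →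
        c * (n : ℝ) ^ 2 ≤ (rBip n 2 t (2 * t - (2 + t) / 2 + 2) : ℝ) ∧
        (rBip n 2 t (2 * t - (2 + t) / 2 + 2) : ℝ) ≤ (n : ℝ) ^ 2) ∧
    (∀ t : ℕ, 4 ≤ t → Even t →
      ∃ c : ℝ, 0 < c ∧ ∃ n₀ : ℕ, ∀ n : ℕ, n₀ ≤ n →
        c * (n : ℝ) ^ 2 ≤ (rBip n 3 t (3 * t - (3 + t) / 2 + 2) : ℝ) ∧
        (rBip n 3 t (3 * t - (3 + t) / 2 + 2) : ℝ) ≤ (n : ℝ) ^ 2) := by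
  refine ⟨fun s hs => ?_, fun t ht => ?_, fun t ht hte => ?_⟩
  · have := Nat.le_mul_of_pos_right s (by omega : 0 < s + 1)
    exact exists_bounds_rBip_of_lt (m := s - 1) (by omega) (by omega) (by omega) (by omega)
      (by omega)
  · exact exists_bounds_rBip_of_two_mul_le (m := t / 2) (by omega) (by omega) le_rfl (by omega)
      (by omega) ht
  · rw [Nat.even_iff] at hte
    exact exists_bounds_rBip_of_two_mul_le (m := t / 2) (by omega) (by omega) (by omega)
      (by omega) (by omega) (by omega)
end

section
/- Let s and t be integers with t ≥ s ≥ 3. Then there exist a constant c > 0 and a natural number n₀ such that for all n ≥ n₀, r(K_{n,n}, K_{s,t}, st - ⌊(s+t)/2⌋ + 2) ≥ c·n^{3/2}. -/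
open Finset

private lemma image_card_bound {n : ℕ} (f : Fin n × Fin n → ℕ) (A B : Finset (Fin n))
    (S : Finset (Fin n × Fin n)) (hS : S ⊆ A ×ˢ B) :
    ((A ×ˢ B).image f).card ≤ (A.card * B.card - S.card) + (S.image f).card := by
  calc ((A ×ˢ B).image f).card
      = (((A ×ˢ B \ S) ∪ S).image f).card := by rw [sdiff_union_of_subset hS]
    _ = ((A ×ˢ B \ S).image f ∪ S.image f).card := by rw [image_union]
    _ ≤ ((A ×ˢ B \ S).image f).card + (S.image f).card := card_union_le _ _
    _ ≤ (A ×ˢ B \ S).card + (S.image f).card := Nat.add_le_add_right card_image_le _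
    _ = (A.card * B.card - S.card) + (S.image f).card := by rw [card_sdiff_of_subset hS, card_product]

private lemma key (s t : ℕ) (hs : 3 ≤ s) (hst : s ≤ t) :
    ∃ K : ℕ, 0 < K ∧ ∀ n : ℕ, s + t ≤ n → ∀ k : ℕ,
      ∀ c : Fin n → Fin n → ℕ, (∀ a b, c a b < k) →
      (∀ A B : Finset (Fin n), (A.card = s ∧ B.card = t) ∨ (A.card = t ∧ B.card = s) →
          s * t - (s + t) / 2 + 2 ≤ ((A ×ˢ B).image fun p => c p.1 p.2).card) →
      n * n ≤ (K * k) := by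
  classical
  obtain ⟨d, hd⟩ : ∃ d, d = (s + t) / 2 := ⟨_, rfl⟩
  obtain ⟨r, hr⟩ : ∃ r, r = d - 1 := ⟨_, rfl⟩
  obtain ⟨R, hR⟩ : ∃ R, R = (t - s) / 2 := ⟨_, rfl⟩
  obtain ⟨C₀, hC₀⟩ : ∃ C, C = r * s + 1 := ⟨_, rfl⟩
  have hd3 : 3 ≤ d := by omega
  have hr2 : 2 ≤ r := by omega
  have hst3 : 3 * t ≤ s * t := Nat.mul_le_mul_right t hs
  have hdt : d ≤ t := by omega
  have hsR : s + 2 * R ≤ t := by omega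
  refine ⟨4 * C₀ + 32 * r * r * R + 9, by positivity, ?_⟩
  intro n hn k c hck H
  by_contra hcon
  push_neg at hcon
  have hn0 : 0 < n := by omega
  have hsn : s ≤ Fintype.card (Fin n) := by simp only [Fintype.card_fin]; omega
  have htn : t ≤ Fintype.card (Fin n) := by simp only [Fintype.card_fin]; omega
  -- star bound: every color appears at most r times in each row
  have hstar : ∀ (γ : ℕ) (x : Fin n),
      ((univ : Finset (Fin n)).filter (fun y => c x y = γ)).card ≤ r := by
    intro γ x
    by_contra hcon2
    push_neg at hcon2
    obtain ⟨Y, hYsub, hYcard⟩ := Finset.exists_subset_card_eq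
      (show d ≤ ((univ : Finset (Fin n)).filter (fun y => c x y = γ)).card by omega)
    obtain ⟨B, hYB, -, hBcard⟩ := Finset.exists_subsuperset_card_eq (n := t) Y.subset_univ
      (by omega) (by simpa using htn)
    obtain ⟨A, hxA, -, hAcard⟩ := Finset.exists_subsuperset_card_eq (n := s)
      (Finset.subset_univ {x}) (by simp; omega) (by simpa using hsn)
    have hSsub : Y.image (fun y => (x, y)) ⊆ A ×ˢ B := by
      intro p hp
      obtain ⟨y, hy, rfl⟩ := mem_image.mp hp
      exact mem_product.mpr ⟨hxA (mem_singleton_self x), hYB hy⟩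
    have hb := image_card_bound (fun p => c p.1 p.2) A B _ hSsub
    have hScard : (Y.image (fun y => (x, y))).card = d := by
      rw [card_image_of_injective _ (fun a b h => by injection h)]
      exact hYcard
    have himg : ((Y.image (fun y => (x, y))).image fun p => c p.1 p.2).card ≤ 1 := by
      refine le_trans (card_le_card ?_) (le_of_eq (card_singleton γ))
      intro z hz
      obtain ⟨p, hp, rfl⟩ := mem_image.mp hz
      obtain ⟨y, hy, rfl⟩ := mem_image.mp hp
      simpa using (mem_filter.mp (hYsub hy)).2
    have hq := H A B (Or.inl ⟨hAcard, hBcard⟩)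
    rw [hAcard, hBcard, hScard] at hb
    omega
  -- class size bounded by r times number of touched rows
  have hEbound : ∀ γ : ℕ,
      (((univ : Finset (Fin n)) ×ˢ univ).filter (fun p => c p.1 p.2 = γ)).card
        ≤ r * ((univ : Finset (Fin n)).filter (fun x => ∃ y, c x y = γ)).card := by
    intro γ
    rw [Finset.card_eq_sum_card_fiberwise
      (f := fun p : Fin n × Fin n => p.1) (t := univ) (fun p _ => mem_univ _)]
    have hfib : ∀ x : Fin n,
        ((((univ : Finset (Fin n)) ×ˢ univ).filter (fun p => c p.1 p.2 = γ)).filter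
          (fun p => p.1 = x)).card
          = ((univ : Finset (Fin n)).filter (fun y => c x y = γ)).card := by
      intro x
      have he : (((univ : Finset (Fin n)) ×ˢ univ).filter (fun p => c p.1 p.2 = γ)).filter
          (fun p => p.1 = x)
          = ((univ : Finset (Fin n)).filter (fun y => c x y = γ)).image (fun y => (x, y)) := by
        ext p
        simp only [mem_filter, mem_product, mem_univ, true_and, mem_image]
        constructor
        · rintro ⟨hc1, hx⟩
          exact ⟨p.2, by rw [← hx]; exact hc1, by rw [← hx]⟩
        · rintro ⟨y, hy, rfl⟩
          exact ⟨hy, rfl⟩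
      rw [he, card_image_of_injective _ (fun a b h => by injection h)]
    simp only [hfib]
    have hzero : ∀ x ∈ (univ : Finset (Fin n)),
        x ∉ (univ : Finset (Fin n)).filter (fun x => ∃ y, c x y = γ) →
        ((univ : Finset (Fin n)).filter (fun y => c x y = γ)).card = 0 := by
      intro x _ hx
      rw [card_eq_zero, filter_eq_empty_iff]
      intro y _ hy
      exact hx (mem_filter.mpr ⟨mem_univ x, ⟨y, hy⟩⟩)
    rw [← Finset.sum_subset (Finset.filter_subset _ _) hzero]
    calc ∑ x ∈ (univ : Finset (Fin n)).filter (fun x => ∃ y, c x y = γ),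
          ((univ : Finset (Fin n)).filter (fun y => c x y = γ)).card
        ≤ ((univ : Finset (Fin n)).filter (fun x => ∃ y, c x y = γ)).card • r :=
          Finset.sum_le_card_nsmul _ _ _ (fun x _ => hstar γ x)
      _ = r * ((univ : Finset (Fin n)).filter (fun x => ∃ y, c x y = γ)).card := by
          rw [smul_eq_mul, Nat.mul_comm]
  -- total number of cells
  have htotal : ∑ γ ∈ range k,
      (((univ : Finset (Fin n)) ×ˢ univ).filter (fun p => c p.1 p.2 = γ)).card = n * n := by
    rw [← Finset.card_eq_sum_card_fiberwise
      (f := fun p : Fin n × Fin n => c p.1 p.2) (t := range k)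
      (fun p _ => mem_range.mpr (hck p.1 p.2))]
    rw [card_product]
    simp
  -- big colors touch many rows
  have hbigrows : ∀ γ : ℕ,
      C₀ ≤ (((univ : Finset (Fin n)) ×ˢ univ).filter (fun p => c p.1 p.2 = γ)).card →
      s + 1 ≤ ((univ : Finset (Fin n)).filter (fun x => ∃ y, c x y = γ)).card := by
    intro γ hbig
    by_contra hcon3
    push_neg at hcon3
    have h1 := hEbound γ
    have h2 : r * ((univ : Finset (Fin n)).filter (fun x => ∃ y, c x y = γ)).card ≤ r * s :=
      Nat.mul_le_mul_left r (by omega)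
    omega
  -- two distinct rows share at most R big colors
  have hpair : ∀ x₁ x₂ : Fin n, x₁ ≠ x₂ →
      (((range k).filter (fun γ =>
          C₀ ≤ (((univ : Finset (Fin n)) ×ˢ univ).filter (fun p => c p.1 p.2 = γ)).card)).filter
        (fun γ => (∃ y, c x₁ y = γ) ∧ (∃ y, c x₂ y = γ))).card ≤ R := by
    intro x₁ x₂ hx12
    by_contra hcon2
    push_neg at hcon2
    obtain ⟨G, hGsub, hGcard⟩ := Finset.exists_subset_card_eq
      (show R + 1 ≤ _ from hcon2)
    obtain ⟨γ₀, hγ₀G⟩ := Finset.card_pos.mp (show 0 < G.card by omega)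
    have hγ₀ := mem_filter.mp (hGsub hγ₀G)
    have hγ₀big : C₀ ≤ (((univ : Finset (Fin n)) ×ˢ univ).filter
        (fun p => c p.1 p.2 = γ₀)).card := (mem_filter.mp hγ₀.1).2
    have hrowsγ₀ := hbigrows γ₀ hγ₀big
    -- pick s-2 further rows for γ₀
    have hTle : s - 2 ≤ (((univ : Finset (Fin n)).filter (fun x => ∃ y, c x y = γ₀))
        \ {x₁, x₂}).card := by
      have h1 := Finset.le_card_sdiff ({x₁, x₂} : Finset (Fin n))
        ((univ : Finset (Fin n)).filter (fun x => ∃ y, c x y = γ₀))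
      have h2 : ({x₁, x₂} : Finset (Fin n)).card ≤ 2 := (card_insert_le _ _).trans (by simp)
      omega
    obtain ⟨T, hTsub, hTcard⟩ := Finset.exists_subset_card_eq hTle
    have hx1T : x₁ ∉ T := fun h => (mem_sdiff.mp (hTsub h)).2 (by simp)
    have hx2T : x₂ ∉ T := fun h => (mem_sdiff.mp (hTsub h)).2 (by simp)
    have hAcard : (insert x₁ (insert x₂ T)).card = s := by
      rw [card_insert_of_notMem (by simp [hx12, hx1T]), card_insert_of_notMem hx2T, hTcard]
      omega
    have hArows : ∀ x ∈ insert x₁ (insert x₂ T), ∃ y, c x y = γ₀ := by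
      intro x hx
      rcases mem_insert.mp hx with rfl | hx
      · exact hγ₀.2.1
      rcases mem_insert.mp hx with rfl | hx
      · exact hγ₀.2.2
      · exact (mem_filter.mp (mem_sdiff.mp (hTsub hx)).1).2
    have hG'card : (G.erase γ₀).card = R := by rw [card_erase_of_mem hγ₀G, hGcard]; omega
    have hG'mem : ∀ γ ∈ G.erase γ₀, (∃ y, c x₁ y = γ) ∧ (∃ y, c x₂ y = γ) := fun γ hγ =>
      (mem_filter.mp (hGsub (mem_of_mem_erase hγ))).2
    -- choice functions
    let w : Fin n → Fin n := fun x => if h : ∃ y, c x y = γ₀ then h.choose else ⟨0, hn0⟩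
    have hw : ∀ x ∈ insert x₁ (insert x₂ T), c x (w x) = γ₀ := by
      intro x hx
      have h := hArows x hx
      simp only [w, dif_pos h]
      exact h.choose_spec
    let u : ℕ → Fin n := fun γ => if h : ∃ y, c x₁ y = γ then h.choose else ⟨0, hn0⟩
    have hu : ∀ γ ∈ G.erase γ₀, c x₁ (u γ) = γ := by
      intro γ hγ
      have h := (hG'mem γ hγ).1
      simp only [u, dif_pos h]
      exact h.choose_spec
    let v : ℕ → Fin n := fun γ => if h : ∃ y, c x₂ y = γ then h.choose else ⟨0, hn0⟩
    have hv : ∀ γ ∈ G.erase γ₀, c x₂ (v γ) = γ := by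
      intro γ hγ
      have h := (hG'mem γ hγ).2
      simp only [v, dif_pos h]
      exact h.choose_spec
    -- column set
    have hB0 : ((insert x₁ (insert x₂ T)).image w ∪ (G.erase γ₀).image u
        ∪ (G.erase γ₀).image v).card ≤ t := by
      have h1 := card_union_le ((insert x₁ (insert x₂ T)).image w ∪ (G.erase γ₀).image u)
        ((G.erase γ₀).image v)
      have h2 := card_union_le ((insert x₁ (insert x₂ T)).image w) ((G.erase γ₀).image u)
      have h3 := card_image_le (s := insert x₁ (insert x₂ T)) (f := w)
      have h4 := card_image_le (s := G.erase γ₀) (f := u)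
      have h5 := card_image_le (s := G.erase γ₀) (f := v)
      omega
    obtain ⟨B, hB0B, -, hBcard⟩ := Finset.exists_subsuperset_card_eq (n := t)
      (Finset.subset_univ _) hB0 (by simpa using htn)
    -- the special cells
    have hSsub : ((insert x₁ (insert x₂ T)).image (fun x => (x, w x)) ∪
        (G.erase γ₀).image (fun γ => (x₁, u γ)) ∪ (G.erase γ₀).image (fun γ => (x₂, v γ)))
        ⊆ (insert x₁ (insert x₂ T)) ×ˢ B := by
      intro p hp
      rcases mem_union.mp hp with hp1 | hp1
      · rcases mem_union.mp hp1 with hp2 | hp2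
        · obtain ⟨x, hx, rfl⟩ := mem_image.mp hp2
          exact mem_product.mpr ⟨hx,
            hB0B (mem_union_left _ (mem_union_left _ (mem_image_of_mem w hx)))⟩
        · obtain ⟨γ, hγ, rfl⟩ := mem_image.mp hp2
          exact mem_product.mpr ⟨mem_insert_self _ _,
            hB0B (mem_union_left _ (mem_union_right _ (mem_image_of_mem u hγ)))⟩
      · obtain ⟨γ, hγ, rfl⟩ := mem_image.mp hp1
        exact mem_product.mpr ⟨mem_insert_of_mem (mem_insert_self _ _),
          hB0B (mem_union_right _ (mem_image_of_mem v hγ))⟩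
    have hc1 : ((insert x₁ (insert x₂ T)).image (fun x => (x, w x))).card = s := by
      rw [card_image_of_injective _ (fun a b h => by injection h), hAcard]
    have hc2 : ((G.erase γ₀).image (fun γ => (x₁, u γ))).card = R := by
      rw [Finset.card_image_of_injOn, hG'card]
      intro a ha b hb hab
      have h2 : u a = u b := by injection hab
      rw [← hu a ha, ← hu b hb, h2]
    have hc3 : ((G.erase γ₀).image (fun γ => (x₂, v γ))).card = R := by
      rw [Finset.card_image_of_injOn, hG'card]
      intro a ha b hb hab
      have h2 : v a = v b := by injection hab
      rw [← hv a ha, ← hv b hb, h2]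
    have hd12 : Disjoint ((insert x₁ (insert x₂ T)).image (fun x => (x, w x)))
        ((G.erase γ₀).image (fun γ => (x₁, u γ))) := by
      rw [Finset.disjoint_left]
      rintro p hp1 hp2
      obtain ⟨x, hx, rfl⟩ := mem_image.mp hp1
      obtain ⟨γ, hγ, he⟩ := mem_image.mp hp2
      have e1 : x₁ = x := congrArg Prod.fst he
      have e2 : u γ = w x := congrArg Prod.snd he
      refine (mem_erase.mp hγ).1 ?_
      calc γ = c x₁ (u γ) := (hu γ hγ).symm
        _ = c x (w x) := by rw [e1, e2]
        _ = γ₀ := hw x hx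
    have hd13 : Disjoint ((insert x₁ (insert x₂ T)).image (fun x => (x, w x)))
        ((G.erase γ₀).image (fun γ => (x₂, v γ))) := by
      rw [Finset.disjoint_left]
      rintro p hp1 hp2
      obtain ⟨x, hx, rfl⟩ := mem_image.mp hp1
      obtain ⟨γ, hγ, he⟩ := mem_image.mp hp2
      have e1 : x₂ = x := congrArg Prod.fst he
      have e2 : v γ = w x := congrArg Prod.snd he
      refine (mem_erase.mp hγ).1 ?_
      calc γ = c x₂ (v γ) := (hv γ hγ).symm
        _ = c x (w x) := by rw [e1, e2]
        _ = γ₀ := hw x hx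
    have hd23 : Disjoint ((G.erase γ₀).image (fun γ => (x₁, u γ)))
        ((G.erase γ₀).image (fun γ => (x₂, v γ))) := by
      rw [Finset.disjoint_left]
      rintro p hp1 hp2
      obtain ⟨γ, hγ, rfl⟩ := mem_image.mp hp1
      obtain ⟨γ', hγ', he⟩ := mem_image.mp hp2
      exact hx12 (congrArg Prod.fst he).symm
    have hScard : ((insert x₁ (insert x₂ T)).image (fun x => (x, w x)) ∪
        (G.erase γ₀).image (fun γ => (x₁, u γ)) ∪ (G.erase γ₀).image (fun γ => (x₂, v γ))).card
        = s + R + R := by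
      rw [card_union_of_disjoint (disjoint_union_left.mpr ⟨hd13, hd23⟩),
        card_union_of_disjoint hd12, hc1, hc2, hc3]
    have himgsub : (((insert x₁ (insert x₂ T)).image (fun x => (x, w x)) ∪
        (G.erase γ₀).image (fun γ => (x₁, u γ)) ∪ (G.erase γ₀).image (fun γ => (x₂, v γ))).image
          (fun p => c p.1 p.2)) ⊆ insert γ₀ (G.erase γ₀) := by
      intro z hz
      obtain ⟨p, hp, rfl⟩ := mem_image.mp hz
      rcases mem_union.mp hp with hp1 | hp1
      · rcases mem_union.mp hp1 with hp2 | hp2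
        · obtain ⟨x, hx, rfl⟩ := mem_image.mp hp2
          exact mem_insert.mpr (Or.inl (hw x hx))
        · obtain ⟨γ, hγ, rfl⟩ := mem_image.mp hp2
          refine mem_insert.mpr (Or.inr ?_)
          show c x₁ (u γ) ∈ G.erase γ₀
          rw [hu γ hγ]
          exact hγ
      · obtain ⟨γ, hγ, rfl⟩ := mem_image.mp hp1
        refine mem_insert.mpr (Or.inr ?_)
        show c x₂ (v γ) ∈ G.erase γ₀
        rw [hv γ hγ]
        exact hγ
    have himgcard : (((insert x₁ (insert x₂ T)).image (fun x => (x, w x)) ∪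
        (G.erase γ₀).image (fun γ => (x₁, u γ)) ∪ (G.erase γ₀).image (fun γ => (x₂, v γ))).image
          (fun p => c p.1 p.2)).card ≤ R + 1 := by
      refine (card_le_card himgsub).trans ((card_insert_le _ _).trans ?_)
      rw [hG'card]
    have hq := H (insert x₁ (insert x₂ T)) B (Or.inl ⟨hAcard, hBcard⟩)
    have hb := image_card_bound (fun p => c p.1 p.2) (insert x₁ (insert x₂ T)) B _ hSsub
    rw [hAcard, hBcard, hScard] at hb
    omega
  -- double counting of shared big colors over ordered pairs of rows
  have hoffd : ∀ γ : ℕ, ((univ : Finset (Fin n)).filter (fun x => ∃ y, c x y = γ)).offDiag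
      = (univ : Finset (Fin n)).offDiag.filter
          (fun p => (∃ y, c p.1 y = γ) ∧ (∃ y, c p.2 y = γ)) := by
    intro γ
    ext p
    simp only [mem_offDiag, mem_filter, mem_univ, true_and]
    tauto
  have hsumoff : ∑ γ ∈ (range k).filter (fun γ =>
        C₀ ≤ (((univ : Finset (Fin n)) ×ˢ univ).filter (fun p => c p.1 p.2 = γ)).card),
      ((univ : Finset (Fin n)).filter (fun x => ∃ y, c x y = γ)).offDiag.card
      ≤ n * n * R := by
    calc ∑ γ ∈ (range k).filter (fun γ =>
          C₀ ≤ (((univ : Finset (Fin n)) ×ˢ univ).filter (fun p => c p.1 p.2 = γ)).card),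
        ((univ : Finset (Fin n)).filter (fun x => ∃ y, c x y = γ)).offDiag.card
        = ∑ γ ∈ (range k).filter (fun γ =>
            C₀ ≤ (((univ : Finset (Fin n)) ×ˢ univ).filter (fun p => c p.1 p.2 = γ)).card),
          ∑ p ∈ (univ : Finset (Fin n)).offDiag,
            if (∃ y, c p.1 y = γ) ∧ (∃ y, c p.2 y = γ) then 1 else 0 := by
          refine Finset.sum_congr rfl fun γ _ => ?_
          rw [hoffd γ, Finset.card_filter]
      _ = ∑ p ∈ (univ : Finset (Fin n)).offDiag,
            ∑ γ ∈ (range k).filter (fun γ =>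
              C₀ ≤ (((univ : Finset (Fin n)) ×ˢ univ).filter (fun p => c p.1 p.2 = γ)).card),
            if (∃ y, c p.1 y = γ) ∧ (∃ y, c p.2 y = γ) then 1 else 0 := Finset.sum_comm
      _ = ∑ p ∈ (univ : Finset (Fin n)).offDiag,
            (((range k).filter (fun γ =>
              C₀ ≤ (((univ : Finset (Fin n)) ×ˢ univ).filter (fun p => c p.1 p.2 = γ)).card)).filter
              (fun γ => (∃ y, c p.1 y = γ) ∧ (∃ y, c p.2 y = γ))).card := by
          refine Finset.sum_congr rfl fun p _ => ?_
          rw [Finset.card_filter]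
      _ ≤ ∑ _p ∈ (univ : Finset (Fin n)).offDiag, R :=
          Finset.sum_le_sum fun p hp => hpair p.1 p.2 (mem_offDiag.mp hp).2.2
      _ = (univ : Finset (Fin n)).offDiag.card * R := by rw [sum_const, smul_eq_mul]
      _ ≤ n * n * R := by
          refine Nat.mul_le_mul_right R ?_
          have h1 := Finset.offDiag_card (univ : Finset (Fin n))
          have h2 : (univ : Finset (Fin n)).card = n := by simp
          rw [h2] at h1
          omega
  -- squares of row counts
  have hsq : ∀ γ ∈ (range k).filter (fun γ =>
        C₀ ≤ (((univ : Finset (Fin n)) ×ˢ univ).filter (fun p => c p.1 p.2 = γ)).card),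
      ((univ : Finset (Fin n)).filter (fun x => ∃ y, c x y = γ)).card ^ 2
        ≤ 2 * ((univ : Finset (Fin n)).filter (fun x => ∃ y, c x y = γ)).offDiag.card := by
    intro γ hγ
    have h1 := hbigrows γ (mem_filter.mp hγ).2
    have h2 := Finset.offDiag_card ((univ : Finset (Fin n)).filter (fun x => ∃ y, c x y = γ))
    have h3 : 2 * ((univ : Finset (Fin n)).filter (fun x => ∃ y, c x y = γ)).card
        ≤ ((univ : Finset (Fin n)).filter (fun x => ∃ y, c x y = γ)).card
          * ((univ : Finset (Fin n)).filter (fun x => ∃ y, c x y = γ)).card :=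
      Nat.mul_le_mul_right _ (by omega)
    have h4 : ((univ : Finset (Fin n)).filter (fun x => ∃ y, c x y = γ)).card ^ 2
        = ((univ : Finset (Fin n)).filter (fun x => ∃ y, c x y = γ)).card
          * ((univ : Finset (Fin n)).filter (fun x => ∃ y, c x y = γ)).card := sq _
    omega
  -- Cauchy-Schwarz
  have hM2 : (∑ γ ∈ (range k).filter (fun γ =>
        C₀ ≤ (((univ : Finset (Fin n)) ×ˢ univ).filter (fun p => c p.1 p.2 = γ)).card),
      ((univ : Finset (Fin n)).filter (fun x => ∃ y, c x y = γ)).card) ^ 2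
      ≤ k * (2 * (n * n * R)) := by
    calc (∑ γ ∈ (range k).filter (fun γ =>
          C₀ ≤ (((univ : Finset (Fin n)) ×ˢ univ).filter (fun p => c p.1 p.2 = γ)).card),
        ((univ : Finset (Fin n)).filter (fun x => ∃ y, c x y = γ)).card) ^ 2
        ≤ ((range k).filter (fun γ =>
            C₀ ≤ (((univ : Finset (Fin n)) ×ˢ univ).filter (fun p => c p.1 p.2 = γ)).card)).card
          * ∑ γ ∈ (range k).filter (fun γ =>
              C₀ ≤ (((univ : Finset (Fin n)) ×ˢ univ).filter (fun p => c p.1 p.2 = γ)).card),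
            ((univ : Finset (Fin n)).filter (fun x => ∃ y, c x y = γ)).card ^ 2 :=
          sq_sum_le_card_mul_sum_sq
      _ ≤ k * ∑ γ ∈ (range k).filter (fun γ =>
              C₀ ≤ (((univ : Finset (Fin n)) ×ˢ univ).filter (fun p => c p.1 p.2 = γ)).card),
            ((univ : Finset (Fin n)).filter (fun x => ∃ y, c x y = γ)).card ^ 2 := by
          refine Nat.mul_le_mul_right _ ((card_filter_le _ _).trans ?_)
          rw [card_range]
      _ ≤ k * (2 * (n * n * R)) := by
          refine Nat.mul_le_mul_left k ?_
          calc ∑ γ ∈ (range k).filter (fun γ =>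
                C₀ ≤ (((univ : Finset (Fin n)) ×ˢ univ).filter (fun p => c p.1 p.2 = γ)).card),
              ((univ : Finset (Fin n)).filter (fun x => ∃ y, c x y = γ)).card ^ 2
              ≤ ∑ γ ∈ (range k).filter (fun γ =>
                  C₀ ≤ (((univ : Finset (Fin n)) ×ˢ univ).filter (fun p => c p.1 p.2 = γ)).card),
                2 * ((univ : Finset (Fin n)).filter (fun x => ∃ y, c x y = γ)).offDiag.card :=
              Finset.sum_le_sum hsq
            _ = 2 * ∑ γ ∈ (range k).filter (fun γ =>
                  C₀ ≤ (((univ : Finset (Fin n)) ×ˢ univ).filter (fun p => c p.1 p.2 = γ)).card),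
                ((univ : Finset (Fin n)).filter (fun x => ∃ y, c x y = γ)).offDiag.card :=
              (Finset.mul_sum _ _ _).symm
            _ ≤ 2 * (n * n * R) := Nat.mul_le_mul_left 2 hsumoff
  -- lower bound on big sum
  have hSB : ∑ γ ∈ (range k).filter (fun γ =>
        C₀ ≤ (((univ : Finset (Fin n)) ×ˢ univ).filter (fun p => c p.1 p.2 = γ)).card),
      (((univ : Finset (Fin n)) ×ˢ univ).filter (fun p => c p.1 p.2 = γ)).card
      ≤ r * ∑ γ ∈ (range k).filter (fun γ =>
        C₀ ≤ (((univ : Finset (Fin n)) ×ˢ univ).filter (fun p => c p.1 p.2 = γ)).card),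
      ((univ : Finset (Fin n)).filter (fun x => ∃ y, c x y = γ)).card := by
    rw [Finset.mul_sum]
    exact Finset.sum_le_sum fun γ _ => hEbound γ
  have hsplit : n * n ≤ (∑ γ ∈ (range k).filter (fun γ =>
        C₀ ≤ (((univ : Finset (Fin n)) ×ˢ univ).filter (fun p => c p.1 p.2 = γ)).card),
      (((univ : Finset (Fin n)) ×ˢ univ).filter (fun p => c p.1 p.2 = γ)).card) + k * C₀ := by
    have h1 := Finset.sum_filter_add_sum_filter_not (range k) (fun γ =>
        C₀ ≤ (((univ : Finset (Fin n)) ×ˢ univ).filter (fun p => c p.1 p.2 = γ)).card)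
      (fun γ => (((univ : Finset (Fin n)) ×ˢ univ).filter (fun p => c p.1 p.2 = γ)).card)
    have h2 : ∑ γ ∈ (range k).filter (fun γ =>
          ¬ C₀ ≤ (((univ : Finset (Fin n)) ×ˢ univ).filter (fun p => c p.1 p.2 = γ)).card),
        (((univ : Finset (Fin n)) ×ˢ univ).filter (fun p => c p.1 p.2 = γ)).card ≤ k * C₀ := by
      calc ∑ γ ∈ (range k).filter (fun γ =>
            ¬ C₀ ≤ (((univ : Finset (Fin n)) ×ˢ univ).filter (fun p => c p.1 p.2 = γ)).card),
          (((univ : Finset (Fin n)) ×ˢ univ).filter (fun p => c p.1 p.2 = γ)).card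
          ≤ ((range k).filter (fun γ =>
            ¬ C₀ ≤ (((univ : Finset (Fin n)) ×ˢ univ).filter (fun p => c p.1 p.2 = γ)).card)).card
            • C₀ := Finset.sum_le_card_nsmul _ _ _ (fun γ hγ =>
              le_of_lt (Nat.lt_of_not_le (mem_filter.mp hγ).2))
        _ ≤ k * C₀ := by
            rw [smul_eq_mul]
            exact Nat.mul_le_mul_right C₀ ((card_filter_le _ _).trans (le_of_eq (card_range k)))
    omega
  -- endgame
  have e0 : 4 * (k * C₀) = (4 * C₀) * k := by ring
  have e0' : (4 * C₀) * k ≤ (4 * C₀ + 32 * r * r * R + 9) * k :=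
    Nat.mul_le_mul_right k (by omega)
  have e1 : 3 * (n * n) ≤ 4 * (∑ γ ∈ (range k).filter (fun γ =>
        C₀ ≤ (((univ : Finset (Fin n)) ×ˢ univ).filter (fun p => c p.1 p.2 = γ)).card),
      (((univ : Finset (Fin n)) ×ˢ univ).filter (fun p => c p.1 p.2 = γ)).card) := by
    omega
  have e2 : 3 * (n * n) ≤ 4 * (r * ∑ γ ∈ (range k).filter (fun γ =>
        C₀ ≤ (((univ : Finset (Fin n)) ×ˢ univ).filter (fun p => c p.1 p.2 = γ)).card),
      ((univ : Finset (Fin n)).filter (fun x => ∃ y, c x y = γ)).card) :=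
    e1.trans (Nat.mul_le_mul_left 4 hSB)
  have e3 : (3 * (n * n)) ^ 2 ≤ (4 * (r * ∑ γ ∈ (range k).filter (fun γ =>
        C₀ ≤ (((univ : Finset (Fin n)) ×ˢ univ).filter (fun p => c p.1 p.2 = γ)).card),
      ((univ : Finset (Fin n)).filter (fun x => ∃ y, c x y = γ)).card)) ^ 2 :=
    Nat.pow_le_pow_left e2 2
  have e4 : (4 * (r * ∑ γ ∈ (range k).filter (fun γ =>
        C₀ ≤ (((univ : Finset (Fin n)) ×ˢ univ).filter (fun p => c p.1 p.2 = γ)).card),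
      ((univ : Finset (Fin n)).filter (fun x => ∃ y, c x y = γ)).card)) ^ 2
      = 16 * (r * r) * ((∑ γ ∈ (range k).filter (fun γ =>
        C₀ ≤ (((univ : Finset (Fin n)) ×ˢ univ).filter (fun p => c p.1 p.2 = γ)).card),
      ((univ : Finset (Fin n)).filter (fun x => ∃ y, c x y = γ)).card) ^ 2) := by ring
  have e5 : 16 * (r * r) * ((∑ γ ∈ (range k).filter (fun γ =>
        C₀ ≤ (((univ : Finset (Fin n)) ×ˢ univ).filter (fun p => c p.1 p.2 = γ)).card),
      ((univ : Finset (Fin n)).filter (fun x => ∃ y, c x y = γ)).card) ^ 2)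
      ≤ 16 * (r * r) * (k * (2 * (n * n * R))) := Nat.mul_le_mul_left _ hM2
  have e6 : 16 * (r * r) * (k * (2 * (n * n * R))) = (32 * r * r * R * k) * (n * n) := by ring
  have e7 : (32 * r * r * R * k) * (n * n) ≤ ((4 * C₀ + 32 * r * r * R + 9) * k) * (n * n) :=
    Nat.mul_le_mul_right _ (Nat.mul_le_mul_right k (by omega))
  have e8 : ((4 * C₀ + 32 * r * r * R + 9) * k) * (n * n) < (n * n) * (n * n) :=
    Nat.mul_lt_mul_of_lt_of_le hcon (le_refl _) (by omega)
  have e9 : (3 * (n * n)) ^ 2 = 9 * ((n * n) * (n * n)) := by ring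
  omega

private lemma witness (s t n : ℕ) (hs : 3 ≤ s) (hst : s ≤ t) (hn : s + t ≤ n) :
    ∃ c : Fin n → Fin n → ℕ, (∀ a b, c a b < n * n) ∧
      ∀ A B : Finset (Fin n), (A.card = s ∧ B.card = t) ∨ (A.card = t ∧ B.card = s) →
        s * t - (s + t) / 2 + 2 ≤ ((A ×ˢ B).image fun p => c p.1 p.2).card := by
  have hst3 : 3 * t ≤ s * t := Nat.mul_le_mul_right t hs
  refine ⟨fun a b => a.1 * n + b.1, fun a b => ?_, fun A B hAB => ?_⟩
  · have ha := a.2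
    have hb := b.2
    have h1 : (a.1 + 1) * n ≤ n * n := Nat.mul_le_mul_right n ha
    rw [Nat.add_mul, one_mul] at h1
    show a.1 * n + b.1 < n * n
    omega
  · have hinj : Function.Injective (fun p : Fin n × Fin n => p.1.1 * n + p.2.1) := by
      rintro ⟨a, b⟩ ⟨a', b'⟩ h
      simp only at h
      have hb := b.2
      have hb' := b'.2
      have hfst : a.1 = a'.1 := by
        rcases Nat.lt_trichotomy a.1 a'.1 with h1 | h1 | h1
        · have h2 : (a.1 + 1) * n ≤ a'.1 * n := Nat.mul_le_mul_right n h1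
          rw [Nat.add_mul, one_mul] at h2
          omega
        · exact h1
        · have h2 : (a'.1 + 1) * n ≤ a.1 * n := Nat.mul_le_mul_right n h1
          rw [Nat.add_mul, one_mul] at h2
          omega
      have hsnd : b.1 = b'.1 := by
        rw [hfst] at h
        omega
      exact Prod.ext (Fin.ext hfst) (Fin.ext hsnd)
    rw [Finset.card_image_of_injective _ hinj, card_product]
    rcases hAB with ⟨h1, h2⟩ | ⟨h1, h2⟩ <;> rw [h1, h2]
    · omega
    · have : t * s = s * t := Nat.mul_comm t s
      omega

/-- For `t ≥ s ≥ 3`, `r(K_{n,n}, K_{s,t}, st - ⌊(s+t)/2⌋ + 2) = Ω(n^{3/2})`. -/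
theorem stmt_8 (s t : ℕ) (hs : 3 ≤ s) (hst : s ≤ t) :
    ∃ c : ℝ, 0 < c ∧ ∃ n₀ : ℕ, ∀ n : ℕ, n₀ ≤ n →
      c * (n : ℝ) ^ ((3 : ℝ) / 2) ≤ (rBip n s t (s * t - (s + t) / 2 + 2) : ℝ) := by
  obtain ⟨K, hK0, hK⟩ := key s t hs hst
  refine ⟨1 / (K : ℝ), by positivity, s + t, fun n hn => ?_⟩
  have hne : {k : ℕ | ∃ c : Fin n → Fin n → ℕ, (∀ a b, c a b < k) ∧
      ∀ A B : Finset (Fin n), (A.card = s ∧ B.card = t) ∨ (A.card = t ∧ B.card = s) →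
        s * t - (s + t) / 2 + 2 ≤ ((A ×ˢ B).image fun p => c p.1 p.2).card}.Nonempty := by
    obtain ⟨c, h1, h2⟩ := witness s t n hs hst hn
    exact ⟨n * n, c, h1, h2⟩
  have hmem : rBip n s t (s * t - (s + t) / 2 + 2) ∈
      {k : ℕ | ∃ c : Fin n → Fin n → ℕ, (∀ a b, c a b < k) ∧
      ∀ A B : Finset (Fin n), (A.card = s ∧ B.card = t) ∨ (A.card = t ∧ B.card = s) →
        s * t - (s + t) / 2 + 2 ≤ ((A ×ˢ B).image fun p => c p.1 p.2).card} := by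
    rw [rBip]
    exact Nat.sInf_mem hne
  obtain ⟨c0, hc1, hc2⟩ := hmem
  have hb : n * n ≤ K * rBip n s t (s * t - (s + t) / 2 + 2) := hK n hn _ c0 hc1 hc2
  have hn1 : (1 : ℝ) ≤ (n : ℝ) := by
    have h6 : 1 ≤ n := by omega
    exact_mod_cast h6
  have h32 : (n : ℝ) ^ ((3 : ℝ) / 2) ≤ (n : ℝ) ^ (2 : ℝ) :=
    Real.rpow_le_rpow_of_exponent_le hn1 (by norm_num)
  have h2 : (n : ℝ) ^ (2 : ℝ) = (n : ℝ) * (n : ℝ) := by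
    rw [show (2:ℝ) = ((2:ℕ):ℝ) by norm_num, Real.rpow_natCast]
    ring
  have hbR : (n : ℝ) * n ≤ (K : ℝ) * (rBip n s t (s * t - (s + t) / 2 + 2) : ℝ) := by
    exact_mod_cast hb
  have hKpos : (0 : ℝ) < (K : ℝ) := by exact_mod_cast hK0
  rw [div_mul_eq_mul_div, one_mul, div_le_iff₀ hKpos]
  calc (n : ℝ) ^ ((3 : ℝ) / 2) ≤ (n : ℝ) * n := by rw [← h2]; exact h32
    _ ≤ (K : ℝ) * (rBip n s t (s * t - (s + t) / 2 + 2) : ℝ) := hbR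
    _ = (rBip n s t (s * t - (s + t) / 2 + 2) : ℝ) * K := by ring
end
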